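/- arXiv:2008.13071 — 2 statements merged into one kernel-verified Lean document; each statement's English description precedes it below -/
import Mathlib

section
/- Let K : R^n \ {0} -> C satisfy |K(x)| <= C_K / |x|^n and the cancellation condition that the integral of K over every annulus {epsilon < |x| < R} vanishes. Let phi be a nonnegative smooth function supported in {|x| <= 1/4} with integral 1, and set phi_k(x) = 2^{-kn} phi(2^{-k}x), K_k = K * indicator of {|x| <= 2^k}. Then for every k in Z and x in R^n, |(phi_k * K_k)(x)| <= c_n C_K 2^{-kn} * indicator{|x| <= 2^{k+1}}(x), where c_n depends only on n and phi. -/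
open MeasureTheory
open scoped ENNReal
open Metric Set Filter
open scoped Topology

noncomputable section

variable {n : ℕ}

/-- Dyadic dilate `φ_k(x) = 2^{-kn} φ(2^{-k} x)`. -/
def dyadicDilate (n : ℕ) (φ : EuclideanSpace ℝ (Fin n) → ℝ) (k : ℤ)
    (x : EuclideanSpace ℝ (Fin n)) : ℝ :=
  ((2 : ℝ) ^ (k * (n : ℤ)))⁻¹ * φ (((2 : ℝ) ^ k)⁻¹ • x)

/-- Truncated kernel `K_k = K · χ_{{|x| ≤ 2^k}}`. -/
def truncBelow (n : ℕ) (K : EuclideanSpace ℝ (Fin n) → ℂ) (k : ℤ)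
    (x : EuclideanSpace ℝ (Fin n)) : ℂ :=
  if ‖x‖ ≤ (2 : ℝ) ^ k then K x else 0

/-- Convolution `(f ⋆ g)(x) = ∫ f(x - z) g(z) dz` of a real function with a complex one. -/
def convRC (n : ℕ) (f : EuclideanSpace ℝ (Fin n) → ℝ) (g : EuclideanSpace ℝ (Fin n) → ℂ)
    (x : EuclideanSpace ℝ (Fin n)) : ℂ :=
  ∫ z, (f (x - z) : ℂ) * g z

lemma radial_lintegral_bound' (n : ℕ) (hn : 1 ≤ n) (R : ℝ) (hR : 0 < R) :
    ∫⁻ z in Metric.ball (0 : EuclideanSpace ℝ (Fin n)) R,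
        ENNReal.ofReal (‖z‖ ^ ((1:ℝ)/2 - n)) ≤
      ENNReal.ofReal ((4 * 2 ^ n *
        (volume (Metric.ball (0 : EuclideanSpace ℝ (Fin n)) 1)).toReal) * R ^ ((1:ℝ)/2)) := by
  classical
  set E := EuclideanSpace ℝ (Fin n)
  haveI : Nontrivial E := by
    apply Module.nontrivial_of_finrank_pos (R := ℝ)
    rw [finrank_euclideanSpace_fin]
    exact hn
  set q : ℝ := (1:ℝ)/2 - n with hq_def
  have hq_neg : q < 0 := by
    have : (1:ℝ) ≤ (n:ℝ) := by exact_mod_cast hn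
    simp only [hq_def]; linarith
  set c : ℝ := (2:ℝ)⁻¹ with hc_def
  have hc0 : 0 < c := by norm_num [hc_def]
  have hc1 : c < 1 := by norm_num [hc_def]
  set V : ℝ≥0∞ := volume (Metric.ball (0 : E) 1) with hV_def
  have hVfin : V ≠ ⊤ := measure_ball_lt_top.ne
  set A : ℕ → Set E := fun j => Metric.ball (0:E) (R * c ^ j) \ Metric.ball (0:E) (R * c ^ (j+1))
    with hA_def
  -- covering
  have hcover : Metric.ball (0:E) R ⊆ {(0:E)} ∪ ⋃ j, A j := by
    intro z hz
    rcases eq_or_ne z 0 with rfl | hz0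
    · exact Or.inl rfl
    right
    have hznorm : 0 < ‖z‖ := norm_pos_iff.mpr hz0
    have hzR : ‖z‖ < R := by simpa using hz
    have hex : ∃ m : ℕ, R * c ^ m ≤ ‖z‖ := by
      obtain ⟨m, hm⟩ := exists_pow_lt_of_lt_one (div_pos hznorm hR) hc1
      exact ⟨m, by rw [mul_comm]; exact le_of_lt ((lt_div_iff₀ hR).mp hm)⟩
    have hj₀ : R * c ^ (Nat.find hex) ≤ ‖z‖ := Nat.find_spec hex
    have hj₀pos : 0 < Nat.find hex := by
      rcases Nat.eq_zero_or_pos (Nat.find hex) with h | h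
      · rw [h] at hj₀; simp at hj₀; linarith
      · exact h
    have hsucc : Nat.find hex - 1 + 1 = Nat.find hex := Nat.succ_pred_eq_of_pos hj₀pos
    have hnotmin : ¬ (R * c ^ (Nat.find hex - 1) ≤ ‖z‖) :=
      Nat.find_min hex (Nat.pred_lt hj₀pos.ne')
    refine mem_iUnion.mpr ⟨Nat.find hex - 1, ?_, ?_⟩
    · simpa [mem_ball_zero_iff] using lt_of_not_ge hnotmin
    · simp only [mem_ball_zero_iff, not_lt]
      rw [hsucc]
      exact hj₀
  set r : ℝ := (2:ℝ) ^ (-((1:ℝ)/2)) with hr_def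
  have hr_pos : 0 < r := Real.rpow_pos_of_pos two_pos _
  have hr34 : r ≤ 3/4 := by
    have hsq : r ^ (2:ℕ) = 2⁻¹ := by
      rw [hr_def, ← Real.rpow_natCast ((2:ℝ) ^ (-((1:ℝ)/2))) 2, ← Real.rpow_mul (by norm_num)]
      norm_num
    have h2 : r ^ (2:ℕ) ≤ (3/4:ℝ) ^ (2:ℕ) := by rw [hsq]; norm_num
    exact le_of_pow_le_pow_left₀ two_ne_zero (by norm_num) h2
  have hcexp : ∀ (m : ℕ), c ^ m = (2:ℝ) ^ (-(m:ℝ)) := by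
    intro m
    rw [hc_def, ← Real.rpow_natCast (2:ℝ)⁻¹ m, Real.inv_rpow (by norm_num),
      ← Real.rpow_neg (by norm_num)]
  -- bound on each annulus
  have hterm : ∀ j : ℕ, ∫⁻ z in A j, ENNReal.ofReal (‖z‖ ^ q) ≤
      ENNReal.ofReal ((R ^ ((1:ℝ)/2) * 2 ^ n) * r ^ j) * V := by
    intro j
    have hrj : (0:ℝ) < R * c ^ (j+1) := by positivity
    have hAm : MeasurableSet (A j) := measurableSet_ball.diff measurableSet_ball
    have h1 : ∫⁻ z in A j, ENNReal.ofReal (‖z‖ ^ q) ≤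
        ∫⁻ _ in A j, ENNReal.ofReal ((R * c ^ (j+1)) ^ q) := by
      apply setLIntegral_mono' hAm
      intro z hz
      apply ENNReal.ofReal_le_ofReal
      apply Real.rpow_le_rpow_of_nonpos hrj _ hq_neg.le
      simpa [mem_ball_zero_iff, not_lt] using hz.2
    refine h1.trans ?_
    rw [setLIntegral_const]
    have hμA : volume (A j) ≤ ENNReal.ofReal ((R * c ^ j) ^ n) * V := by
      calc volume (A j) ≤ volume (Metric.ball (0:E) (R * c ^ j)) := measure_mono diff_subset
        _ = ENNReal.ofReal ((R * c ^ j) ^ Module.finrank ℝ E) * V :=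
            Measure.addHaar_ball _ _ (by positivity)
        _ = ENNReal.ofReal ((R * c ^ j) ^ n) * V := by rw [finrank_euclideanSpace_fin]
    have key : (R * c ^ (j+1)) ^ q * (R * c ^ j) ^ n =
        R ^ ((1:ℝ)/2) * ((2:ℝ) ^ ((n:ℝ) - 1/2) * r ^ j) := by
      have h1' : (R * c ^ (j+1)) ^ q = R ^ q * (2:ℝ) ^ (-(((j:ℕ)+1:ℝ)) * q) := by
        rw [hcexp (j+1), Real.mul_rpow hR.le (Real.rpow_nonneg (by norm_num) _),
          ← Real.rpow_mul (by norm_num : (0:ℝ) ≤ 2)]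
        push_cast
        ring_nf
      have h2' : (R * c ^ j) ^ n = R ^ ((n:ℕ):ℝ) * (2:ℝ) ^ (-((j:ℝ)) * n) := by
        rw [← Real.rpow_natCast (R * c ^ j) n, hcexp j,
          Real.mul_rpow hR.le (Real.rpow_nonneg (by norm_num) _),
          ← Real.rpow_mul (by norm_num : (0:ℝ) ≤ 2)]
      have h3' : r ^ j = (2:ℝ) ^ (-((j:ℝ))/2) := by
        rw [hr_def, ← Real.rpow_natCast ((2:ℝ) ^ (-((1:ℝ)/2))) j,
          ← Real.rpow_mul (by norm_num : (0:ℝ) ≤ 2)]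
        ring_nf
      rw [h1', h2', h3']
      have e1 : q + ((n:ℕ):ℝ) = 1/2 := by rw [hq_def]; push_cast; ring
      calc R ^ q * (2:ℝ) ^ (-(((j:ℕ)+1:ℝ)) * q) * (R ^ ((n:ℕ):ℝ) * (2:ℝ) ^ (-((j:ℝ)) * n))
          = (R ^ q * R ^ ((n:ℕ):ℝ)) * ((2:ℝ) ^ (-(((j:ℕ)+1:ℝ)) * q) * (2:ℝ) ^ (-((j:ℝ)) * n)) := by
            ring
        _ = R ^ (q + ((n:ℕ):ℝ)) * (2:ℝ) ^ ((-(((j:ℕ)+1:ℝ)) * q) + (-((j:ℝ)) * n)) := by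
            rw [← Real.rpow_add hR, ← Real.rpow_add two_pos]
        _ = R ^ ((1:ℝ)/2) * (2:ℝ) ^ (((n:ℝ) - 1/2) + (-((j:ℝ))/2)) := by
            rw [e1]
            congr 1
            rw [hq_def]
            push_cast
            ring
        _ = R ^ ((1:ℝ)/2) * ((2:ℝ) ^ ((n:ℝ) - 1/2) * (2:ℝ) ^ (-((j:ℝ))/2)) := by
            rw [Real.rpow_add two_pos]
    calc ENNReal.ofReal ((R * c ^ (j+1)) ^ q) * volume (A j)
        ≤ ENNReal.ofReal ((R * c ^ (j+1)) ^ q) * (ENNReal.ofReal ((R * c ^ j) ^ n) * V) :=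
          mul_le_mul_right hμA _
      _ = ENNReal.ofReal ((R * c ^ (j+1)) ^ q * (R * c ^ j) ^ n) * V := by
          rw [ENNReal.ofReal_mul (Real.rpow_nonneg hrj.le _), mul_assoc]
      _ ≤ ENNReal.ofReal ((R ^ ((1:ℝ)/2) * 2 ^ n) * r ^ j) * V := by
          apply mul_le_mul_left
          apply ENNReal.ofReal_le_ofReal
          rw [key]
          have h2n : (2:ℝ) ^ ((n:ℝ) - 1/2) ≤ 2 ^ n := by
            rw [← Real.rpow_natCast 2 n]
            exact Real.rpow_le_rpow_of_exponent_le one_le_two (by linarith)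
          have hrj0 : (0:ℝ) ≤ r ^ j := by positivity
          have hR12 : (0:ℝ) ≤ R ^ ((1:ℝ)/2) := Real.rpow_nonneg hR.le _
          calc R ^ ((1:ℝ)/2) * ((2:ℝ) ^ ((n:ℝ) - 1/2) * r ^ j)
              ≤ R ^ ((1:ℝ)/2) * ((2:ℝ) ^ (n:ℕ) * r ^ j) := by
                apply mul_le_mul_of_nonneg_left _ hR12
                exact mul_le_mul_of_nonneg_right h2n hrj0
            _ = (R ^ ((1:ℝ)/2) * 2 ^ n) * r ^ j := by ring
  -- assemble
  calc ∫⁻ z in Metric.ball (0:E) R, ENNReal.ofReal (‖z‖ ^ q)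
      ≤ ∫⁻ z in ({(0:E)} ∪ ⋃ j, A j), ENNReal.ofReal (‖z‖ ^ q) := lintegral_mono_set hcover
    _ ≤ (∫⁻ z in ({(0:E)} : Set E), ENNReal.ofReal (‖z‖ ^ q)) +
        ∫⁻ z in (⋃ j, A j), ENNReal.ofReal (‖z‖ ^ q) := lintegral_union_le _ _ _
    _ ≤ 0 + ∑' j, ∫⁻ z in A j, ENNReal.ofReal (‖z‖ ^ q) := by
        gcongr
        · rw [Measure.restrict_eq_zero.mpr (measure_singleton 0), lintegral_zero_measure]
        · exact lintegral_iUnion_le _ _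
    _ ≤ 0 + ∑' j, ENNReal.ofReal ((R ^ ((1:ℝ)/2) * 2 ^ n) * r ^ j) * V := by
        gcongr with j
        exact hterm j
    _ = (ENNReal.ofReal (R ^ ((1:ℝ)/2) * 2 ^ n) * V) * ∑' j, (ENNReal.ofReal r) ^ j := by
        rw [zero_add, ← ENNReal.tsum_mul_left]
        congr 1
        funext j
        rw [ENNReal.ofReal_mul (by positivity), ENNReal.ofReal_pow hr_pos.le]
        ring
    _ ≤ (ENNReal.ofReal (R ^ ((1:ℝ)/2) * 2 ^ n) * V) * 4 := by
        apply mul_le_mul_right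
        rw [ENNReal.tsum_geometric]
        have h14 : ENNReal.ofReal (1/4) ≤ 1 - ENNReal.ofReal r := by
          rw [show (1:ℝ≥0∞) = ENNReal.ofReal 1 by simp,
            ← ENNReal.ofReal_sub _ hr_pos.le]
          exact ENNReal.ofReal_le_ofReal (by linarith)
        calc (1 - ENNReal.ofReal r)⁻¹ ≤ (ENNReal.ofReal (1/4))⁻¹ := ENNReal.inv_le_inv' h14
          _ = 4 := by
            rw [show (1/4:ℝ) = (4:ℝ)⁻¹ by norm_num,
              ENNReal.ofReal_inv_of_pos (by norm_num), inv_inv]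
            norm_num
    _ ≤ ENNReal.ofReal ((4 * 2 ^ n * V.toReal) * R ^ ((1:ℝ)/2)) := by
        rw [← ENNReal.ofReal_toReal hVfin]
        rw [← ENNReal.ofReal_mul (by positivity), show (4:ℝ≥0∞) = ENNReal.ofReal 4 by norm_num,
          ← ENNReal.ofReal_mul (by positivity)]
        apply ENNReal.ofReal_le_ofReal
        apply le_of_eq
        rw [ENNReal.toReal_ofReal ENNReal.toReal_nonneg]
        ring


set_option maxHeartbeats 2000000 in
/-- for a kernel with the size bound `|K(x)| ≤ C_K/|x|^n` and vanishing
integrals over all annuli, `|(φ_k ⋆ K_k)(x)| ≤ c_n C_K 2^{-kn} χ_{{|x| ≤ 2^{k+1}}}(x)`,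
with `c_n` depending only on `n` and `φ`. -/
theorem convolution_truncated_kernel_size (n : ℕ) (hn : 1 ≤ n)
    (φ : EuclideanSpace ℝ (Fin n) → ℝ)
    (hφ_smooth : ContDiff ℝ (⊤ : ℕ∞) φ) (hφ_nonneg : ∀ x, 0 ≤ φ x)
    (hφ_radial : ∀ x y : EuclideanSpace ℝ (Fin n), ‖x‖ = ‖y‖ → φ x = φ y)
    (hφ_supp : Function.support φ ⊆ Metric.closedBall 0 (1 / 4))
    (hφ_int : ∫ x, φ x = 1) :
    ∃ c : ℝ, 0 < c ∧
      ∀ (K : EuclideanSpace ℝ (Fin n) → ℂ) (C_K : ℝ), 0 < C_K →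
        (∀ x : EuclideanSpace ℝ (Fin n), x ≠ 0 → ‖K x‖ ≤ C_K / ‖x‖ ^ n) →
        (∀ ε R : ℝ, 0 < ε → ε < R →
          ∫ x in {x : EuclideanSpace ℝ (Fin n) | ε < ‖x‖ ∧ ‖x‖ < R}, K x = 0) →
        ∀ (k : ℤ) (x : EuclideanSpace ℝ (Fin n)),
          ‖convRC n (dyadicDilate n φ k) (truncBelow n K k) x‖ ≤
            (c * C_K * ((2 : ℝ) ^ (k * (n : ℤ)))⁻¹) *
              Set.indicator {x : EuclideanSpace ℝ (Fin n) | ‖x‖ ≤ (2 : ℝ) ^ (k + 1)}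
                (fun _ => (1 : ℝ)) x := by
  classical
  haveI hNT : Nontrivial (EuclideanSpace ℝ (Fin n)) := by
    apply Module.nontrivial_of_finrank_pos (R := ℝ)
    rw [finrank_euclideanSpace_fin]; exact hn
  -- compact support
  have hφ_compact : HasCompactSupport φ := by
    apply HasCompactSupport.intro (isCompact_closedBall (0 : EuclideanSpace ℝ (Fin n)) (1/4))
    intro y hy
    by_contra h
    exact hy (hφ_supp h)
  -- Lipschitz constant
  obtain ⟨L₀, hL₀⟩ := ContDiff.lipschitzWith_of_hasCompactSupport hφ_compact hφ_smooth (by simp)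
  set L : ℝ := max (L₀ : ℝ) 1 with hL_def
  have hL1 : (1:ℝ) ≤ L := le_max_right _ _
  have hLpos : (0:ℝ) < L := lt_of_lt_of_le one_pos hL1
  have hLip : ∀ a b : EuclideanSpace ℝ (Fin n), |φ a - φ b| ≤ L * ‖a - b‖ := by
    intro a b
    have h := hL₀.dist_le_mul a b
    rw [Real.dist_eq, dist_eq_norm] at h
    calc |φ a - φ b| ≤ (L₀ : ℝ) * ‖a - b‖ := h
      _ ≤ L * ‖a - b‖ := by
          apply mul_le_mul_of_nonneg_right (le_max_left _ _) (norm_nonneg _)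
  -- sup bound
  obtain ⟨x₀, hx₀⟩ := hφ_smooth.continuous.exists_forall_ge_of_hasCompactSupport hφ_compact
  set M : ℝ := max (φ x₀) 1 with hM_def
  have hM1 : (1:ℝ) ≤ M := le_max_right _ _
  have hMpos : (0:ℝ) < M := lt_of_lt_of_le one_pos hM1
  have hM : ∀ y, φ y ≤ M := fun y => le_trans (hx₀ y) (le_max_left _ _)
  -- constants
  set CB : ℝ := 4 * 2 ^ n *
      (volume (Metric.ball (0 : EuclideanSpace ℝ (Fin n)) 1)).toReal with hCB_def
  have hCB0 : 0 ≤ CB := by positivity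
  refine ⟨CB * (8 * L + 2 * M) + 1, by positivity, ?_⟩
  intro K C_K hCK hKsize hKcancel k x
  set c : ℝ := CB * (8 * L + 2 * M) + 1 with hc_def
  have hc0 : (0:ℝ) < c := by positivity
  set T : ℝ := (2:ℝ) ^ k with hT_def
  have hT : (0:ℝ) < T := zpow_pos two_pos _
  set P : ℝ := (2:ℝ) ^ (k * (n:ℤ)) with hP_def
  have hP : (0:ℝ) < P := zpow_pos two_pos _
  have hsupp : ∀ y : EuclideanSpace ℝ (Fin n), φ y ≠ 0 → ‖y‖ ≤ 1/4 := by
    intro y hy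
    have := hφ_supp (by exact hy : y ∈ Function.support φ)
    simpa [Metric.mem_closedBall, dist_zero_right] using this
  -- power facts
  set W : ℝ := ((2:ℝ) ^ (k+1) : ℝ) ^ ((1:ℝ)/2) with hW_def
  have hW0 : 0 ≤ W := Real.rpow_nonneg (le_of_lt (zpow_pos two_pos _)) _
  have hT2 : T < (2:ℝ) ^ (k+1) := by
    rw [zpow_add_one₀ (two_ne_zero)]
    nlinarith [hT]
  have hTr : T = (2:ℝ) ^ ((k:ℤ):ℝ) := (Real.rpow_intCast 2 k).symm
  have hTinv : T⁻¹ = (2:ℝ) ^ (-((k:ℤ):ℝ)) := by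
    rw [hTr, ← Real.rpow_neg (by norm_num)]
  have hThalf : T ^ ((1:ℝ)/2) = (2:ℝ) ^ (((k:ℤ):ℝ)/2) := by
    rw [hTr, ← Real.rpow_mul (by norm_num)]
    ring_nf
  have hWr : W = (2:ℝ) ^ ((((k:ℤ):ℝ)+1)/2) := by
    rw [hW_def, show ((2:ℝ) ^ (k+1) : ℝ) = (2:ℝ) ^ ((((k:ℤ):ℝ))+1) from by
      rw [show (((k:ℤ):ℝ))+1 = (((k+1:ℤ)):ℝ) from by push_cast; ring, Real.rpow_intCast],
      ← Real.rpow_mul (by norm_num)]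
    ring_nf
  have fact3 : T⁻¹ * T ^ ((1:ℝ)/2) = T ^ (-((1:ℝ)/2)) := by
    rw [hTinv, hThalf, ← Real.rpow_add two_pos, hTr, ← Real.rpow_mul (by norm_num)]
    congr 1
    ring
  have fact2 : T ^ (-((1:ℝ)/2)) * W ≤ 2 := by
    rw [hTr, ← Real.rpow_mul (by norm_num), hWr, ← Real.rpow_add two_pos]
    calc (2:ℝ) ^ (((k:ℤ):ℝ) * (-(1/2)) + ((((k:ℤ):ℝ))+1)/2)
        = (2:ℝ) ^ ((1:ℝ)/2) := by congr 1; ring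
      _ ≤ (2:ℝ) ^ ((1:ℝ)) := Real.rpow_le_rpow_of_exponent_le one_le_two (by norm_num)
      _ = 2 := Real.rpow_one 2
  have fact1 : T⁻¹ * T ^ ((1:ℝ)/2) * W ≤ 2 := by rw [fact3]; exact fact2
  -- master estimate
  have hball_meas : MeasurableSet (Metric.ball (0 : EuclideanSpace ℝ (Fin n)) ((2:ℝ)^(k+1))) :=
    measurableSet_ball
  have master : ∀ (f : EuclideanSpace ℝ (Fin n) → ℂ) (S : Set (EuclideanSpace ℝ (Fin n))) (D : ℝ),
      MeasurableSet S → 0 ≤ D →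
      (∀ z ∈ S, z ≠ 0 → ‖f z‖ ≤ D * (Metric.ball (0 : EuclideanSpace ℝ (Fin n)) ((2:ℝ)^(k+1))).indicator
          (fun z => ‖z‖ ^ ((1:ℝ)/2 - (n:ℝ))) z) →
      ‖∫ z in S, f z‖ ≤ D * (CB * W) := by
    intro f S D hS hD hbd
    have hae : ∀ᵐ z ∂(volume.restrict S), ENNReal.ofReal ‖f z‖ ≤
        ENNReal.ofReal (D * (Metric.ball (0 : EuclideanSpace ℝ (Fin n)) ((2:ℝ)^(k+1))).indicator
          (fun z => ‖z‖ ^ ((1:ℝ)/2 - (n:ℝ))) z) := by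
      have h1 : ∀ᵐ z ∂(volume.restrict S), z ∈ S := ae_restrict_mem hS
      have h2 : ∀ᵐ z ∂(volume.restrict S), z ≠ (0 : EuclideanSpace ℝ (Fin n)) := by
        refine (ae_iff).mpr ?_
        have he : {z : EuclideanSpace ℝ (Fin n) | ¬ z ≠ 0} = {0} := by ext; simp
        rw [he]
        exact measure_singleton 0
      filter_upwards [h1, h2] with z hz hz0
      exact ENNReal.ofReal_le_ofReal (hbd z hz hz0)
    have hCW : 0 ≤ CB * W := by positivity
    calc ‖∫ z in S, f z‖ ≤ (∫⁻ z in S, ENNReal.ofReal ‖f z‖).toReal :=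
          norm_integral_le_lintegral_norm f
      _ ≤ (ENNReal.ofReal (D * (CB * W))).toReal := by
          apply ENNReal.toReal_mono ENNReal.ofReal_ne_top
          calc ∫⁻ z in S, ENNReal.ofReal ‖f z‖
              ≤ ∫⁻ z in S, ENNReal.ofReal (D * (Metric.ball (0 : EuclideanSpace ℝ (Fin n)) ((2:ℝ)^(k+1))).indicator
                  (fun z => ‖z‖ ^ ((1:ℝ)/2 - (n:ℝ))) z) := lintegral_mono_ae hae
            _ ≤ ∫⁻ z, ENNReal.ofReal (D * (Metric.ball (0 : EuclideanSpace ℝ (Fin n)) ((2:ℝ)^(k+1))).indicator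
                  (fun z => ‖z‖ ^ ((1:ℝ)/2 - (n:ℝ))) z) := setLIntegral_le_lintegral _ _
            _ = ENNReal.ofReal D * ∫⁻ z in Metric.ball (0 : EuclideanSpace ℝ (Fin n)) ((2:ℝ)^(k+1)),
                  ENNReal.ofReal (‖z‖ ^ ((1:ℝ)/2 - (n:ℝ))) := by
                rw [show (fun z => ENNReal.ofReal (D * (Metric.ball (0 : EuclideanSpace ℝ (Fin n)) ((2:ℝ)^(k+1))).indicator
                    (fun z => ‖z‖ ^ ((1:ℝ)/2 - (n:ℝ))) z)) =
                    (Metric.ball (0 : EuclideanSpace ℝ (Fin n)) ((2:ℝ)^(k+1))).indicator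
                      (fun z => ENNReal.ofReal D * ENNReal.ofReal (‖z‖ ^ ((1:ℝ)/2 - (n:ℝ)))) from ?_,
                  lintegral_indicator hball_meas, lintegral_const_mul' _ _ ENNReal.ofReal_ne_top]
                funext z
                by_cases hz : z ∈ Metric.ball (0 : EuclideanSpace ℝ (Fin n)) ((2:ℝ)^(k+1))
                · rw [Set.indicator_of_mem hz, Set.indicator_of_mem hz,
                    ENNReal.ofReal_mul hD]
                · rw [Set.indicator_of_notMem hz, Set.indicator_of_notMem hz, mul_zero,
                    ENNReal.ofReal_zero]
            _ ≤ ENNReal.ofReal D * ENNReal.ofReal (CB * W) := by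
                apply mul_le_mul_right
                have := radial_lintegral_bound' n hn ((2:ℝ)^(k+1)) (zpow_pos two_pos _)
                rw [hCB_def, hW_def]
                exact this
            _ = ENNReal.ofReal (D * (CB * W)) := (ENNReal.ofReal_mul hD).symm
      _ = D * (CB * W) := ENNReal.toReal_ofReal (by positivity)
  -- unfolding helpers
  have hφc : ∀ z : EuclideanSpace ℝ (Fin n),
      dyadicDilate n φ k (x - z) = P⁻¹ * φ (T⁻¹ • (x - z)) := by
    intro z; rw [dyadicDilate, hP_def, hT_def]
  have htrunc : ∀ z : EuclideanSpace ℝ (Fin n), ‖z‖ ≤ T → truncBelow n K k z = K z := by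
    intro z hz; rw [truncBelow, if_pos (by rw [← hT_def]; exact hz)]
  have htrunc0 : ∀ z : EuclideanSpace ℝ (Fin n), ¬ (‖z‖ ≤ T) → truncBelow n K k z = 0 := by
    intro z hz; rw [truncBelow, if_neg (by rw [← hT_def]; exact hz)]
  have hnorm_mul : ∀ (a : ℝ) (w : ℂ), ‖((a:ℝ):ℂ) * w‖ = |a| * ‖w‖ := by
    intro a w; rw [norm_mul, Complex.norm_real, Real.norm_eq_abs]
  have hnormsm : ∀ z : EuclideanSpace ℝ (Fin n),
      ‖T⁻¹ • (x - z) - T⁻¹ • x‖ = T⁻¹ * ‖z‖ := by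
    intro z
    rw [← smul_sub, norm_smul, show (x - z) - x = -z from by abel, norm_neg,
      Real.norm_eq_abs, abs_of_pos (inv_pos.mpr hT)]
  have hKnorm : ∀ z : EuclideanSpace ℝ (Fin n), z ≠ 0 → ‖K z‖ ≤ C_K / ‖z‖ ^ n := hKsize
  -- rpow helpers
  have hzpow1 : ∀ z : EuclideanSpace ℝ (Fin n), z ≠ 0 → ‖z‖ ≤ T →
      ‖z‖ * (C_K / ‖z‖ ^ n) ≤ C_K * T ^ ((1:ℝ)/2) * ‖z‖ ^ ((1:ℝ)/2 - (n:ℝ)) := by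
    intro z hz hzT
    have hy : 0 < ‖z‖ := norm_pos_iff.mpr hz
    have e1 : C_K / ‖z‖ ^ n = C_K * ‖z‖ ^ (-((n:ℕ):ℝ)) := by
      rw [div_eq_mul_inv, ← Real.rpow_natCast ‖z‖ n, ← Real.rpow_neg hy.le]
    rw [e1]
    have e2 : ‖z‖ * (C_K * ‖z‖ ^ (-((n:ℕ):ℝ))) =
        C_K * (‖z‖ ^ ((1:ℝ)/2) * ‖z‖ ^ ((1:ℝ)/2 - (n:ℝ))) := by
      have h12 : (1:ℝ)/2 + ((1:ℝ)/2 - (n:ℝ)) = 1 + (-((n:ℕ):ℝ)) := by push_cast; ring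
      rw [← Real.rpow_add hy, h12, Real.rpow_add hy, Real.rpow_one]
      ring
    rw [e2, mul_assoc]
    apply mul_le_mul_of_nonneg_left _ hCK.le
    apply mul_le_mul_of_nonneg_right _ (Real.rpow_nonneg hy.le _)
    exact Real.rpow_le_rpow hy.le hzT (by norm_num)
  have hzpow2 : ∀ (ρ : ℝ), 0 < ρ → ∀ z : EuclideanSpace ℝ (Fin n), z ≠ 0 → ρ ≤ ‖z‖ →
      C_K / ‖z‖ ^ n ≤ C_K * ρ ^ (-((1:ℝ)/2)) * ‖z‖ ^ ((1:ℝ)/2 - (n:ℝ)) := by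
    intro ρ hρ z hz hρz
    have hy : 0 < ‖z‖ := norm_pos_iff.mpr hz
    have e1 : C_K / ‖z‖ ^ n = C_K * ‖z‖ ^ (-((n:ℕ):ℝ)) := by
      rw [div_eq_mul_inv, ← Real.rpow_natCast ‖z‖ n, ← Real.rpow_neg hy.le]
    rw [e1]
    have e2 : C_K * ‖z‖ ^ (-((n:ℕ):ℝ)) =
        C_K * (‖z‖ ^ (-((1:ℝ)/2)) * ‖z‖ ^ ((1:ℝ)/2 - (n:ℝ))) := by
      have h12 : -((1:ℝ)/2) + ((1:ℝ)/2 - (n:ℝ)) = -((n:ℕ):ℝ) := by push_cast; ring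
      rw [← Real.rpow_add hy, h12]
    rw [e2, mul_assoc]
    apply mul_le_mul_of_nonneg_left _ hCK.le
    apply mul_le_mul_of_nonneg_right _ (Real.rpow_nonneg hy.le _)
    exact Real.rpow_le_rpow_of_nonpos hρ hρz (by norm_num)
  -- case far away
  by_cases hx : ‖x‖ ≤ (2:ℝ)^(k+1)
  case neg =>
    have hzero : ∀ z : EuclideanSpace ℝ (Fin n),
        ((dyadicDilate n φ k (x - z) : ℝ) : ℂ) * truncBelow n K k z = 0 := by
      intro z
      by_cases hz : ‖z‖ ≤ T
      · rcases eq_or_ne (φ (T⁻¹ • (x - z))) 0 with h0 | h0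
        · rw [hφc z, h0, mul_zero]
          simp
        · exfalso
          have h14 := hsupp _ h0
          have hns : ‖T⁻¹ • (x - z)‖ = T⁻¹ * ‖x - z‖ := by
            rw [norm_smul, Real.norm_eq_abs, abs_of_pos (inv_pos.mpr hT)]
          rw [hns] at h14
          have hxz : ‖x - z‖ ≤ T/4 := by
            have := mul_le_mul_of_nonneg_left h14 hT.le
            rw [← mul_assoc, mul_inv_cancel₀ hT.ne', one_mul] at this
            linarith
          have htri : ‖x‖ ≤ ‖x - z‖ + ‖z‖ := by
            calc ‖x‖ = ‖(x - z) + z‖ := by rw [sub_add_cancel]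
              _ ≤ ‖x - z‖ + ‖z‖ := norm_add_le _ _
          apply hx
          have h2k : ((2:ℝ):ℝ)^(k+1) = 2*T := by
            rw [hT_def, zpow_add_one₀ (two_ne_zero)]; ring
          rw [h2k]
          linarith
      · rw [htrunc0 z hz, mul_zero]
    have hLHS : convRC n (dyadicDilate n φ k) (truncBelow n K k) x = 0 := by
      rw [convRC, show (fun z => ((dyadicDilate n φ k (x - z) : ℝ) : ℂ) * truncBelow n K k z) =
        (fun _ => (0:ℂ)) from funext hzero, integral_zero]
    rw [hLHS, norm_zero, Set.indicator_of_notMem (by simpa using hx), mul_zero]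
  case pos =>
    rw [Set.indicator_of_mem (by simpa using hx : x ∈ {x : EuclideanSpace ℝ (Fin n) | ‖x‖ ≤ (2:ℝ)^(k+1)}), mul_one]
    set g : EuclideanSpace ℝ (Fin n) → ℂ :=
      fun z => ((dyadicDilate n φ k (x - z) : ℝ) : ℂ) * truncBelow n K k z with hg_def
    have hconv : convRC n (dyadicDilate n φ k) (truncBelow n K k) x = ∫ z, g z := rfl
    rw [hconv]
    by_cases hInt : Integrable g volume
    case neg =>
      rw [integral_undef hInt, norm_zero]
      positivity
    case pos =>
      set t : ℝ := φ (T⁻¹ • x) with ht_def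
      have ht0 : 0 ≤ t := hφ_nonneg _
      have hind_nonneg : ∀ z : EuclideanSpace ℝ (Fin n),
          0 ≤ (Metric.ball (0 : EuclideanSpace ℝ (Fin n)) ((2:ℝ)^(k+1))).indicator
            (fun z => ‖z‖ ^ ((1:ℝ)/2 - (n:ℝ))) z := by
        intro z
        exact Set.indicator_nonneg (fun y _ => Real.rpow_nonneg (norm_nonneg y) _) z
      have hLipz : ∀ z : EuclideanSpace ℝ (Fin n), |φ (T⁻¹ • (x - z)) - t| ≤ L * (T⁻¹ * ‖z‖) := by
        intro z
        calc |φ (T⁻¹ • (x - z)) - t| = |φ (T⁻¹ • (x - z)) - φ (T⁻¹ • x)| := by rw [ht_def]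
          _ ≤ L * ‖T⁻¹ • (x - z) - T⁻¹ • x‖ := hLip _ _
          _ = L * (T⁻¹ * ‖z‖) := by rw [hnormsm]
      -- the key Lipschitz-difference pointwise bound, used in both subcases
      have hdiff_bd : ∀ z : EuclideanSpace ℝ (Fin n), z ≠ 0 → ‖z‖ ≤ T →
          |P⁻¹ * φ (T⁻¹ • (x - z)) - P⁻¹ * t| * ‖K z‖ ≤
            (P⁻¹ * (L * T⁻¹ * C_K * T ^ ((1:ℝ)/2))) * ‖z‖ ^ ((1:ℝ)/2 - (n:ℝ)) := by
        intro z hz hzT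
        have h1 : |P⁻¹ * φ (T⁻¹ • (x - z)) - P⁻¹ * t| = P⁻¹ * |φ (T⁻¹ • (x - z)) - t| := by
          rw [← mul_sub, abs_mul, abs_of_pos (inv_pos.mpr hP)]
        have h2 : |φ (T⁻¹ • (x - z)) - t| ≤ L * (T⁻¹ * ‖z‖) := by
          calc |φ (T⁻¹ • (x - z)) - t| = |φ (T⁻¹ • (x - z)) - φ (T⁻¹ • x)| := by rw [ht_def]
            _ ≤ L * ‖T⁻¹ • (x - z) - T⁻¹ • x‖ := hLip _ _
            _ = L * (T⁻¹ * ‖z‖) := by rw [hnormsm]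
        have h3 : ‖K z‖ ≤ C_K / ‖z‖ ^ n := hKnorm z hz
        have hKnn : 0 ≤ ‖K z‖ := norm_nonneg _
        calc |P⁻¹ * φ (T⁻¹ • (x - z)) - P⁻¹ * t| * ‖K z‖
            = P⁻¹ * (|φ (T⁻¹ • (x - z)) - t| * ‖K z‖) := by rw [h1]; ring
          _ ≤ P⁻¹ * ((L * (T⁻¹ * ‖z‖)) * (C_K / ‖z‖ ^ n)) := by
              apply mul_le_mul_of_nonneg_left _ (inv_pos.mpr hP).le
              apply mul_le_mul h2 h3 hKnn (by positivity)
          _ = P⁻¹ * (L * T⁻¹) * (‖z‖ * (C_K / ‖z‖ ^ n)) := by ring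
          _ ≤ P⁻¹ * (L * T⁻¹) * (C_K * T ^ ((1:ℝ)/2) * ‖z‖ ^ ((1:ℝ)/2 - (n:ℝ))) := by
              apply mul_le_mul_of_nonneg_left (hzpow1 z hz hzT) (by positivity)
          _ = (P⁻¹ * (L * T⁻¹ * C_K * T ^ ((1:ℝ)/2))) * ‖z‖ ^ ((1:ℝ)/2 - (n:ℝ)) := by ring
      have harith1 : (P⁻¹ * (L * T⁻¹ * C_K * T ^ ((1:ℝ)/2))) * (CB * W) ≤ (CB * (2 * L)) * (C_K * P⁻¹) := by
        have hTW : T⁻¹ * T ^ ((1:ℝ)/2) * W ≤ 2 := fact1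
        have e : (P⁻¹ * (L * T⁻¹ * C_K * T ^ ((1:ℝ)/2))) * (CB * W) =
            (CB * L * C_K * P⁻¹) * (T⁻¹ * T ^ ((1:ℝ)/2) * W) := by ring
        rw [e]
        calc (CB * L * C_K * P⁻¹) * (T⁻¹ * T ^ ((1:ℝ)/2) * W) ≤ (CB * L * C_K * P⁻¹) * 2 := by
              apply mul_le_mul_of_nonneg_left hTW (by positivity)
          _ = (CB * (2 * L)) * (C_K * P⁻¹) := by ring
      rcases eq_or_lt_of_le ht0 with ht | ht
      · -- t = 0 case
        have hb : ∀ z ∈ (Set.univ : Set (EuclideanSpace ℝ (Fin n))), z ≠ 0 →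
            ‖g z‖ ≤ (P⁻¹ * (L * T⁻¹ * C_K * T ^ ((1:ℝ)/2))) *
              (Metric.ball (0 : EuclideanSpace ℝ (Fin n)) ((2:ℝ)^(k+1))).indicator
                (fun z => ‖z‖ ^ ((1:ℝ)/2 - (n:ℝ))) z := by
          intro z _ hz
          by_cases hzT : ‖z‖ ≤ T
          · have hmem : z ∈ Metric.ball (0 : EuclideanSpace ℝ (Fin n)) ((2:ℝ)^(k+1)) :=
              mem_ball_zero_iff.mpr (lt_of_le_of_lt hzT hT2)
            rw [Set.indicator_of_mem hmem]
            have hgz : ‖g z‖ = |P⁻¹ * φ (T⁻¹ • (x - z)) - P⁻¹ * t| * ‖K z‖ := by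
              rw [hg_def]
              simp only
              rw [htrunc z hzT, hnorm_mul, hφc z, ← ht, mul_zero, sub_zero]
            rw [hgz]
            exact hdiff_bd z hz hzT
          · have hgz : g z = 0 := by
              rw [hg_def]; simp only; rw [htrunc0 z hzT, mul_zero]
            rw [hgz, norm_zero]
            have := hind_nonneg z
            positivity
        have hmas := master g Set.univ (P⁻¹ * (L * T⁻¹ * C_K * T ^ ((1:ℝ)/2)))
          MeasurableSet.univ (by positivity) hb
        rw [setIntegral_univ] at hmas
        calc ‖∫ z, g z‖ ≤ (P⁻¹ * (L * T⁻¹ * C_K * T ^ ((1:ℝ)/2))) * (CB * W) := hmas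
          _ ≤ (CB * (2 * L)) * (C_K * P⁻¹) := harith1
          _ ≤ c * C_K * P⁻¹ := by
              have h1 : CB * (2 * L) ≤ c := by
                rw [hc_def]; nlinarith [hCB0, hLpos, hMpos]
              have h2 : (0:ℝ) ≤ C_K * P⁻¹ := by positivity
              calc (CB * (2 * L)) * (C_K * P⁻¹) ≤ c * (C_K * P⁻¹) :=
                    mul_le_mul_of_nonneg_right h1 h2
                _ = c * C_K * P⁻¹ := by ring
      · -- t > 0 case
        set m : ℝ := min (t / (2*L)) 1 with hm_def
        have hm0 : 0 < m := lt_min (by positivity) one_pos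
        have hm1 : m ≤ 1 := min_le_right _ _
        set ρ : ℝ := T * m with hρ_def
        have hρ0 : 0 < ρ := mul_pos hT hm0
        have hρT : ρ ≤ T := by
          calc ρ = T * m := hρ_def
            _ ≤ T * 1 := mul_le_mul_of_nonneg_left hm1 hT.le
            _ = T := mul_one T
        have hρhalf : ρ ^ (-((1:ℝ)/2)) ≤ T ^ (-((1:ℝ)/2)) * m⁻¹ := by
          have h1 : ρ ^ (-((1:ℝ)/2)) = T ^ (-((1:ℝ)/2)) * m ^ (-((1:ℝ)/2)) := by
            rw [hρ_def, Real.mul_rpow hT.le hm0.le]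
          rw [h1]
          apply mul_le_mul_of_nonneg_left _ (Real.rpow_nonneg hT.le _)
          have h2 : m ^ (-((1:ℝ)/2)) ≤ m ^ (-(1:ℝ)) :=
            Real.rpow_le_rpow_of_exponent_ge hm0 hm1 (by norm_num)
          rwa [show m ^ (-(1:ℝ)) = m⁻¹ by rw [Real.rpow_neg hm0.le, Real.rpow_one]] at h2
        have htm : t * m⁻¹ ≤ 2*L + M := by
          rcases min_choice (t / (2*L)) 1 with h | h
          · rw [hm_def, h]
            have he : t * (t/(2*L))⁻¹ = 2*L := by
              field_simp
            rw [he]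
            linarith
          · rw [hm_def, h, inv_one, mul_one]
            have := hM (T⁻¹ • x)
            rw [← ht_def] at this
            linarith
        have hphi_lb : ∀ z : EuclideanSpace ℝ (Fin n), ‖z‖ < ρ → t/2 ≤ φ (T⁻¹ • (x - z)) := by
          intro z hz
          have h2 : L * (T⁻¹ * ‖z‖) ≤ t/2 := by
            have hz' : T⁻¹ * ‖z‖ ≤ m := by
              have hzm : ‖z‖ ≤ T * m := by rw [← hρ_def]; exact hz.le
              calc T⁻¹ * ‖z‖ ≤ T⁻¹ * (T * m) :=
                    mul_le_mul_of_nonneg_left hzm (inv_pos.mpr hT).le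
                _ = m := by field_simp
            have hmt : m ≤ t/(2*L) := min_le_left _ _
            calc L * (T⁻¹ * ‖z‖) ≤ L * m := mul_le_mul_of_nonneg_left hz' hLpos.le
              _ ≤ L * (t/(2*L)) := mul_le_mul_of_nonneg_left hmt hLpos.le
              _ = t/2 := by field_simp
          have h3 := (abs_le.mp (hLipz z)).1
          linarith
        -- measurability of K on the ball of radius ρ
        have hg_meas := hInt.aestronglyMeasurable
        have hφcont : Continuous (fun z : EuclideanSpace ℝ (Fin n) => P⁻¹ * φ (T⁻¹ • (x - z))) := by
          apply continuous_const.mul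
          exact hφ_smooth.continuous.comp ((continuous_const.sub continuous_id : Continuous fun z : EuclideanSpace ℝ (Fin n) => x - z).const_smul T⁻¹)
        have hF : AEStronglyMeasurable (fun z : EuclideanSpace ℝ (Fin n) =>
            ((((P⁻¹ * φ (T⁻¹ • (x - z)))⁻¹ : ℝ)) : ℂ) * g z) volume := by
          apply AEStronglyMeasurable.mul _ hg_meas
          apply Measurable.aestronglyMeasurable
          exact Complex.measurable_ofReal.comp hφcont.measurable.inv
        have hK_meas : AEStronglyMeasurable K
            (volume.restrict (Metric.ball (0 : EuclideanSpace ℝ (Fin n)) ρ)) := by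
          apply AEStronglyMeasurable.congr hF.restrict
          refine (ae_restrict_iff' measurableSet_ball).mpr (ae_of_all _ ?_)
          intro z hz
          have hzρ : ‖z‖ < ρ := mem_ball_zero_iff.mp hz
          have hφpos : 0 < P⁻¹ * φ (T⁻¹ • (x - z)) :=
            mul_pos (inv_pos.mpr hP) (lt_of_lt_of_le (half_pos ht) (hphi_lb z hzρ))
          have hne : (((P⁻¹ * φ (T⁻¹ • (x - z)) : ℝ)) : ℂ) ≠ 0 :=
            Complex.ofReal_ne_zero.mpr hφpos.ne'
          show ((((P⁻¹ * φ (T⁻¹ • (x - z)))⁻¹ : ℝ)) : ℂ) * g z = K z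
          rw [hg_def]
          simp only
          rw [htrunc z (le_trans hzρ.le hρT), hφc z, Complex.ofReal_inv]
          exact inv_mul_cancel_left₀ hne (K z)
        -- integrability of K on annuli inside the ball of radius ρ
        have hKint : ∀ ε : ℝ, 0 < ε → ε < ρ →
            IntegrableOn K {z : EuclideanSpace ℝ (Fin n) | ε < ‖z‖ ∧ ‖z‖ < ρ} volume := by
          intro ε hε hερ
          have hAmeas : MeasurableSet {z : EuclideanSpace ℝ (Fin n) | ε < ‖z‖ ∧ ‖z‖ < ρ} := by
            have he : {z : EuclideanSpace ℝ (Fin n) | ε < ‖z‖ ∧ ‖z‖ < ρ} =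
                (fun z : EuclideanSpace ℝ (Fin n) => ‖z‖) ⁻¹' (Set.Ioo ε ρ) := rfl
            rw [he]
            exact measurable_norm measurableSet_Ioo
          have hsub : {z : EuclideanSpace ℝ (Fin n) | ε < ‖z‖ ∧ ‖z‖ < ρ} ⊆
              Metric.ball (0 : EuclideanSpace ℝ (Fin n)) ρ := fun z hz => mem_ball_zero_iff.mpr hz.2
          haveI : IsFiniteMeasure (volume.restrict {z : EuclideanSpace ℝ (Fin n) | ε < ‖z‖ ∧ ‖z‖ < ρ}) := by
            constructor
            rw [Measure.restrict_apply_univ]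
            exact lt_of_le_of_lt (measure_mono hsub) measure_ball_lt_top
          refine Integrable.mono' (integrable_const (C_K / ε ^ n))
            (hK_meas.mono_measure (Measure.restrict_mono hsub le_rfl)) ?_
          refine (ae_restrict_iff' hAmeas).mpr (ae_of_all _ ?_)
          intro z hz
          have hz0 : z ≠ 0 := by
            intro h
            have h1 : ε < ‖z‖ := hz.1
            rw [h, norm_zero] at h1
            exact absurd h1 (not_lt.mpr hε.le)
          calc ‖K z‖ ≤ C_K / ‖z‖ ^ n := hKnorm z hz0
            _ ≤ C_K / ε ^ n := by
              rw [div_le_div_iff₀ (pow_pos (norm_pos_iff.mpr hz0) n) (pow_pos hε n)]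
              have hεz : ε ^ n ≤ ‖z‖ ^ n := pow_le_pow_left₀ hε.le hz.1.le n
              nlinarith [hCK.le]
        -- exhaustion by annuli
        set sq : ℕ → Set (EuclideanSpace ℝ (Fin n)) :=
          fun i => {z : EuclideanSpace ℝ (Fin n) | ρ/((i:ℝ)+2) < ‖z‖} with hsq_def
        have hsq_meas : ∀ i, MeasurableSet (sq i) := by
          intro i
          have he : sq i = (fun z : EuclideanSpace ℝ (Fin n) => ‖z‖) ⁻¹' (Set.Ioi (ρ/((i:ℝ)+2))) := rfl
          rw [he]
          exact measurable_norm measurableSet_Ioi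
        have hsq_mono : Monotone sq := by
          intro i j hij z hz
          simp only [hsq_def, Set.mem_setOf_eq] at hz ⊢
          have hd : ρ/((j:ℝ)+2) ≤ ρ/((i:ℝ)+2) := by
            gcongr <;> exact_mod_cast hij
          linarith
        have hsq_union : (⋃ i, sq i) = ({(0 : EuclideanSpace ℝ (Fin n))}ᶜ : Set (EuclideanSpace ℝ (Fin n))) := by
          ext z
          simp only [Set.mem_iUnion, hsq_def, Set.mem_setOf_eq, Set.mem_compl_iff,
            Set.mem_singleton_iff]
          constructor
          · rintro ⟨i, hi⟩ h0
            rw [h0, norm_zero] at hi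
            have : (0:ℝ) < ρ/((i:ℝ)+2) := by positivity
            linarith
          · intro h0
            have hz : 0 < ‖z‖ := norm_pos_iff.mpr h0
            obtain ⟨i, hi⟩ := exists_nat_gt (ρ/‖z‖)
            refine ⟨i, ?_⟩
            rw [div_lt_iff₀ (by positivity)]
            rw [div_lt_iff₀ hz] at hi
            nlinarith
        have hlim : Tendsto (fun i => ∫ z in sq i, g z) atTop (𝓝 (∫ z, g z)) := by
          have h := tendsto_setIntegral_of_monotone hsq_meas hsq_mono hInt.integrableOn
          rw [hsq_union, restrict_compl_singleton] at h
          exact h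
        refine le_of_tendsto hlim.norm (Filter.Eventually.of_forall ?_)
        intro i
        set ε : ℝ := ρ/((i:ℝ)+2) with hε_def
        have hε0 : 0 < ε := by positivity
        have hερ : ε < ρ := by
          rw [hε_def]
          apply div_lt_self hρ0
          have : (0:ℝ) ≤ (i:ℝ) := Nat.cast_nonneg i
          linarith
        set A : Set (EuclideanSpace ℝ (Fin n)) := {z : EuclideanSpace ℝ (Fin n) | ε < ‖z‖ ∧ ‖z‖ < ρ} with hA_def
        set O : Set (EuclideanSpace ℝ (Fin n)) := {z : EuclideanSpace ℝ (Fin n) | ε < ‖z‖ ∧ ρ ≤ ‖z‖} with hO_def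
        have hO_meas : MeasurableSet O := by
          have he : O = (fun z : EuclideanSpace ℝ (Fin n) => ‖z‖) ⁻¹' (Set.Ioi ε ∩ Set.Ici ρ) := rfl
          rw [he]
          exact measurable_norm (measurableSet_Ioi.inter measurableSet_Ici)
        have hA_meas : MeasurableSet A := by
          have he : A = (fun z : EuclideanSpace ℝ (Fin n) => ‖z‖) ⁻¹' (Set.Ioo ε ρ) := rfl
          rw [he]
          exact measurable_norm measurableSet_Ioo
        have hsplit : sq i = A ∪ O := by
          ext z
          simp only [hsq_def, hA_def, hO_def, Set.mem_setOf_eq, Set.mem_union, ← hε_def]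
          constructor
          · intro hz
            rcases lt_or_ge ‖z‖ ρ with h | h
            · exact Or.inl ⟨hz, h⟩
            · exact Or.inr ⟨hz, h⟩
          · rintro (⟨h, _⟩ | ⟨h, _⟩) <;> exact h
        have hdisj : Disjoint A O := by
          rw [Set.disjoint_left]
          rintro z ⟨_, h1⟩ ⟨_, h2⟩
          exact absurd h2 (not_le.mpr h1)
        have hIA : IntegrableOn g A volume := hInt.integrableOn
        have hIO : IntegrableOn g O volume := hInt.integrableOn
        rw [hsplit, setIntegral_union hdisj hO_meas hIA hIO]
        -- inner estimate
        have hKiA : IntegrableOn K A volume := by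
          rw [hA_def]; exact hKint ε hε0 hερ
        have hcano : ∫ z in A, K z = 0 := by
          rw [hA_def]
          exact hKcancel ε ρ hε0 hερ
        have hinner_eq : ∫ z in A, g z = ∫ z in A, (g z - (((P⁻¹ * t : ℝ)) : ℂ) * K z) := by
          rw [integral_sub hIA (hKiA.const_mul _), integral_const_mul, hcano, mul_zero, sub_zero]
        have hinner : ‖∫ z in A, g z‖ ≤ (P⁻¹ * (L * T⁻¹ * C_K * T ^ ((1:ℝ)/2))) * (CB * W) := by
          rw [hinner_eq]
          apply master _ A _ hA_meas (by positivity)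
          intro z hzA hz0
          have hzρ : ‖z‖ < ρ := hzA.2
          have hzT : ‖z‖ ≤ T := le_trans hzρ.le hρT
          have hmem : z ∈ Metric.ball (0 : EuclideanSpace ℝ (Fin n)) ((2:ℝ)^(k+1)) :=
            mem_ball_zero_iff.mpr (lt_of_le_of_lt hzT hT2)
          rw [Set.indicator_of_mem hmem]
          have he : g z - (((P⁻¹ * t : ℝ)) : ℂ) * K z =
              (((P⁻¹ * φ (T⁻¹ • (x - z)) - P⁻¹ * t : ℝ)) : ℂ) * K z := by
            rw [hg_def]
            simp only
            rw [htrunc z hzT, hφc z]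
            push_cast
            ring
          rw [he, hnorm_mul]
          exact hdiff_bd z hz0 hzT
        -- outer estimate
        have houter : ‖∫ z in O, g z‖ ≤
            (P⁻¹ * (C_K * (t * ρ ^ (-((1:ℝ)/2)) + L * T ^ (-((1:ℝ)/2))))) * (CB * W) := by
          apply master _ O _ hO_meas (by positivity)
          intro z hzO hz0
          have hρz : ρ ≤ ‖z‖ := hzO.2
          by_cases hzT : ‖z‖ ≤ T
          · have hmem : z ∈ Metric.ball (0 : EuclideanSpace ℝ (Fin n)) ((2:ℝ)^(k+1)) :=
              mem_ball_zero_iff.mpr (lt_of_le_of_lt hzT hT2)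
            rw [Set.indicator_of_mem hmem]
            have hgz : ‖g z‖ = (P⁻¹ * |φ (T⁻¹ • (x - z))|) * ‖K z‖ := by
              rw [hg_def]
              simp only
              rw [htrunc z hzT, hnorm_mul, hφc z, abs_mul, abs_of_pos (inv_pos.mpr hP)]
            rw [hgz]
            have hφb : |φ (T⁻¹ • (x - z))| ≤ t + L * (T⁻¹ * ‖z‖) := by
              have h := (abs_le.mp (hLipz z)).2
              rw [abs_of_nonneg (hφ_nonneg _)]
              linarith
            have hK := hKnorm z hz0
            calc (P⁻¹ * |φ (T⁻¹ • (x - z))|) * ‖K z‖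
                ≤ (P⁻¹ * (t + L * (T⁻¹ * ‖z‖))) * (C_K / ‖z‖ ^ n) := by
                  apply mul_le_mul (mul_le_mul_of_nonneg_left hφb (inv_pos.mpr hP).le)
                    hK (norm_nonneg _) (by positivity)
              _ = P⁻¹ * (t * (C_K / ‖z‖ ^ n) + L * T⁻¹ * (‖z‖ * (C_K / ‖z‖ ^ n))) := by ring
              _ ≤ P⁻¹ * (t * (C_K * ρ ^ (-((1:ℝ)/2)) * ‖z‖ ^ ((1:ℝ)/2 - (n:ℝ))) +
                    L * T⁻¹ * (C_K * T ^ ((1:ℝ)/2) * ‖z‖ ^ ((1:ℝ)/2 - (n:ℝ)))) := by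
                  apply mul_le_mul_of_nonneg_left _ (inv_pos.mpr hP).le
                  apply add_le_add
                  · exact mul_le_mul_of_nonneg_left (hzpow2 ρ hρ0 z hz0 hρz) ht0
                  · exact mul_le_mul_of_nonneg_left (hzpow1 z hz0 hzT) (by positivity)
              _ = (P⁻¹ * (C_K * (t * ρ ^ (-((1:ℝ)/2)) + L * (T⁻¹ * T ^ ((1:ℝ)/2))))) *
                    ‖z‖ ^ ((1:ℝ)/2 - (n:ℝ)) := by ring
              _ = (P⁻¹ * (C_K * (t * ρ ^ (-((1:ℝ)/2)) + L * T ^ (-((1:ℝ)/2))))) *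
                    ‖z‖ ^ ((1:ℝ)/2 - (n:ℝ)) := by rw [fact3]
          · have hgz : g z = 0 := by
              rw [hg_def]; simp only; rw [htrunc0 z hzT, mul_zero]
            rw [hgz, norm_zero]
            have := hind_nonneg z
            positivity
        -- final arithmetic
        have harith2 : (P⁻¹ * (C_K * (t * ρ ^ (-((1:ℝ)/2)) + L * T ^ (-((1:ℝ)/2))))) * (CB * W) ≤
            (CB * (2*(2*L+M) + 2*L)) * (C_K * P⁻¹) := by
          have h1 : t * ρ ^ (-((1:ℝ)/2)) ≤ (2*L + M) * T ^ (-((1:ℝ)/2)) := by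
            calc t * ρ ^ (-((1:ℝ)/2)) ≤ t * (T ^ (-((1:ℝ)/2)) * m⁻¹) :=
                  mul_le_mul_of_nonneg_left hρhalf ht0
              _ = (t * m⁻¹) * T ^ (-((1:ℝ)/2)) := by ring
              _ ≤ (2*L+M) * T ^ (-((1:ℝ)/2)) :=
                  mul_le_mul_of_nonneg_right htm (Real.rpow_nonneg hT.le _)
          have hTh : 0 ≤ T ^ (-((1:ℝ)/2)) := Real.rpow_nonneg hT.le _
          calc (P⁻¹ * (C_K * (t * ρ ^ (-((1:ℝ)/2)) + L * T ^ (-((1:ℝ)/2))))) * (CB * W)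
              ≤ (P⁻¹ * (C_K * ((2*L+M) * T ^ (-((1:ℝ)/2)) + L * T ^ (-((1:ℝ)/2))))) * (CB * W) := by
                apply mul_le_mul_of_nonneg_right _ (by positivity)
                apply mul_le_mul_of_nonneg_left _ (inv_pos.mpr hP).le
                apply mul_le_mul_of_nonneg_left _ hCK.le
                exact add_le_add h1 le_rfl
            _ = (P⁻¹ * C_K * ((2*L+M) + L) * CB) * (T ^ (-((1:ℝ)/2)) * W) := by ring
            _ ≤ (P⁻¹ * C_K * ((2*L+M) + L) * CB) * 2 := by
                apply mul_le_mul_of_nonneg_left fact2 (by positivity)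
            _ = (CB * (2*(2*L+M) + 2*L)) * (C_K * P⁻¹) := by ring
        calc ‖(∫ z in A, g z) + ∫ z in O, g z‖ ≤ ‖∫ z in A, g z‖ + ‖∫ z in O, g z‖ :=
              norm_add_le _ _
          _ ≤ (CB * (2 * L)) * (C_K * P⁻¹) + (CB * (2*(2*L+M) + 2*L)) * (C_K * P⁻¹) :=
              add_le_add (hinner.trans harith1) (houter.trans harith2)
          _ = (CB * (8*L + 2*M)) * (C_K * P⁻¹) := by ring
          _ ≤ c * (C_K * P⁻¹) := by
              apply mul_le_mul_of_nonneg_right _ (by positivity)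
              rw [hc_def]
              linarith
          _ = c * C_K * P⁻¹ := by ring



end
end

section
/- Let K be an omega-Dini Calderon-Zygmund convolution kernel: |K(x)| <= C_K/|x|^n, |K(x-y) - K(x)| <= omega(|y|/|x|)/|x|^n for 2|y| <= |x|, with the annulus cancellation condition. Then the truncated Fourier transforms are uniformly bounded: for all k in Z and xi, |integral over {2^k < |x|} of K(x) e^{-2 pi i x . xi} dx| <= c_n (C_K + ||omega||_Dini), where ||omega||_Dini = integral_0^1 omega(t) dt/t. -/
/-!
Put `e(x) = exp(-2πi ⟪x, ξ⟫)` and split `{|x| > R}` at `M = R + 1/|ξ|`. On the annulus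
`R < |x| < M` the cancellation of `K` lets one replace `e` by `e - 1 = O(|x| |ξ|)`, and the size
condition integrates (in polar coordinates) to `O(C_K |ξ| (M - R)) = O(C_K)`.
On `{|x| ≥ M}` the translation by `y = ξ / (2|ξ|²)` flips the sign of `e`, so with
`F = K · 1_{|x| ≥ M}` twice the integral equals `∫ (F z - F (z + y)) e(z) dz`. Since `2|y| ≤ M`,
the regularity condition bounds `|F z - F (z + y)|` by `ω(|y|/|z+y|) / |z+y|^n` where both points
lie in `{|x| ≥ M}`, and in polar coordinates (`r ↦ |y|/r`) this integrates to at most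
`c_n ‖ω‖_Dini`; where only one of them does, `z` lies in a ball of radius `2M` and the size
condition contributes `O(C_K)`.
The integral in the statement is a Bochner integral, so it is `0` when `K` is not integrable on
`{|x| > R}`; for `ξ = 0` it vanishes by cancellation.
-/

open MeasureTheory Real
open scoped ENNReal RealInnerProductSpace

noncomputable section

/-- The Dini norm `‖ω‖_Dini = ∫₀¹ ω(t) dt/t`. -/
def diniNorm (ω : ℝ → ℝ) : ℝ := ∫ t in Set.Ioo (0 : ℝ) 1, ω t / t

open Set Metric

theorem diniNorm_nonneg {ω : ℝ → ℝ} (hω_nonneg : ∀ t ∈ Ioo (0 : ℝ) 1, 0 ≤ ω t) :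
    0 ≤ diniNorm ω :=
  setIntegral_nonneg measurableSet_Ioo fun t ht => div_nonneg (hω_nonneg t ht) ht.1.le

theorem lintegral_Ici_comp_div_le_diniNorm {ω : ℝ → ℝ}
    (hω : IntegrableOn (fun t => ω t / t) (Ioo 0 1)) (hω_nonneg : ∀ t ∈ Ioo (0 : ℝ) 1, 0 ≤ ω t)
    {b M : ℝ} (hb : 0 < b) (hbM : b < M) :
    ∫⁻ r in Ici M, ENNReal.ofReal (ω (b / r) / r) ≤ ENNReal.ofReal (diniNorm ω) := by
  have hM : 0 < M := hb.trans hbM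
  have himage : (fun t => b / t) '' Ioc 0 (b / M) = Ici M := by
    ext r
    constructor
    · rintro ⟨t, ⟨ht, htM⟩, rfl⟩
      exact (le_div_iff₀ ht).2 (by rwa [le_div_iff₀ hM, mul_comm] at htM)
    · intro (hr : M ≤ r)
      have hr₀ : 0 < r := hM.trans_le hr
      exact ⟨b / r, ⟨by positivity, div_le_div_of_nonneg_left hb.le hM hr⟩, by field_simp⟩
  have hderiv : ∀ t ∈ Ioc 0 (b / M),
      HasDerivWithinAt (fun t => b / t) (-(b / t ^ 2)) (Ioc 0 (b / M)) t := fun t ht => by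
    simpa [div_eq_mul_inv, neg_div] using
      ((hasDerivAt_inv ht.1.ne').const_mul b).hasDerivWithinAt
  have hinj : InjOn (fun t => b / t) (Ioc 0 (b / M)) := fun s _ t _ hst =>
    inv_injective (mul_left_cancel₀ hb.ne' hst)
  rw [← himage, lintegral_image_eq_lintegral_abs_deriv_mul measurableSet_Ioc hderiv hinj]
  calc _ = ∫⁻ t in Ioc 0 (b / M), ENNReal.ofReal (ω t / t) := by
        refine setLIntegral_congr_fun measurableSet_Ioc fun t ht => ?_
        have ht₀ : 0 < t := ht.1
        rw [← ENNReal.ofReal_mul (abs_nonneg _)]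
        congr 1
        rw [abs_neg, abs_of_pos (by positivity)]
        field_simp
    _ ≤ ∫⁻ t in Ioo 0 1, ENNReal.ofReal (ω t / t) :=
        lintegral_mono_set (Ioc_subset_Ioo_right ((div_lt_one hM).2 hbM))
    _ = ENNReal.ofReal (diniNorm ω) :=
        (ofReal_integral_eq_lintegral_ofReal hω
          ((ae_restrict_iff' measurableSet_Ioo).2 (.of_forall fun t ht =>
            div_nonneg (hω_nonneg t ht) ht.1.le))).symm

section Polar

variable {E : Type*} [NormedAddCommGroup E] [NormedSpace ℝ E] [FiniteDimensional ℝ E]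
  [MeasurableSpace E] [BorelSpace E] [Nontrivial E] (μ : Measure E) [μ.IsAddHaarMeasure]

local notation "dim" => Module.finrank ℝ

theorem lintegral_fun_norm_addHaar {f : ℝ → ℝ≥0∞} (hf : Measurable f) :
    ∫⁻ x, f ‖x‖ ∂μ =
      dim E * μ (ball 0 1) * ∫⁻ r in Ioi 0, ENNReal.ofReal (r ^ (dim E - 1)) * f r := by
  calc ∫⁻ x, f ‖x‖ ∂μ = ∫⁻ x : ({(0)}ᶜ : Set E), f ‖x.1‖ ∂(μ.comap (↑)) := by
        rw [lintegral_subtype_comap (measurableSet_singleton _).compl (fun x => f ‖x‖),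
          restrict_compl_singleton]
    _ = ∫⁻ p, f p.2 ∂μ.toSphere.prod (.volumeIoiPow (dim E - 1)) := by
        simpa using (μ.measurePreserving_homeomorphUnitSphereProd.lintegral_comp_emb
          (Homeomorph.measurableEmbedding _) (f ∘ Subtype.val ∘ Prod.snd))
    _ = μ.toSphere univ * ∫⁻ r, f r ∂.volumeIoiPow (dim E - 1) := by
        rw [lintegral_prod (fun p : sphere (0 : E) 1 × Ioi (0 : ℝ) => f p.2)
          (hf.comp (measurable_subtype_coe.comp measurable_snd)).aemeasurable]
        exact (lintegral_const (∫⁻ r, f r ∂.volumeIoiPow (dim E - 1))).trans (mul_comm _ _)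
    _ = _ := by
        rw [Measure.toSphere_apply_univ, Measure.volumeIoiPow,
          lintegral_withDensity_eq_lintegral_mul _ (by fun_prop)
            (g := fun r : Ioi (0 : ℝ) => f r) (hf.comp measurable_subtype_coe)]
        exact congrArg _ (lintegral_subtype_comap measurableSet_Ioi
          (fun r => ENNReal.ofReal (r ^ (dim E - 1)) * f r))

theorem setLIntegral_fun_norm_addHaar {f : ℝ → ℝ≥0∞} (hf : Measurable f) {s : Set ℝ}
    (hs : MeasurableSet s) (hs_pos : s ⊆ Ioi 0) :
    ∫⁻ x in {x : E | ‖x‖ ∈ s}, f ‖x‖ ∂μ =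
      dim E * μ (ball 0 1) * ∫⁻ r in s, ENNReal.ofReal (r ^ (dim E - 1)) * f r := by
  have hind : ∀ x : E, {x : E | ‖x‖ ∈ s}.indicator (fun x => f ‖x‖) x = s.indicator f ‖x‖ :=
    fun _ => rfl
  rw [← lintegral_indicator (s := {x : E | ‖x‖ ∈ s}) (measurable_norm hs), funext hind,
    lintegral_fun_norm_addHaar μ (hf.indicator hs)]
  simp only [← indicator_mul_right s (fun r => ENNReal.ofReal (r ^ (dim E - 1))) f]
  rw [lintegral_indicator hs, Measure.restrict_restrict hs, inter_eq_left.2 hs_pos]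

end Polar

def fourierPhase {E : Type*} [NormedAddCommGroup E] [InnerProductSpace ℝ E] (ξ x : E) : ℂ :=
  Complex.exp (-(2 * π * Complex.I) * (⟪x, ξ⟫ : ℝ))

section FourierPhase

variable {E : Type*} [NormedAddCommGroup E] [InnerProductSpace ℝ E]

theorem fourierPhase_eq_exp_I_mul (ξ x : E) :
    fourierPhase ξ x = Complex.exp (Complex.I * ((-(2 * π * ⟪x, ξ⟫) : ℝ) : ℂ)) := by
  rw [fourierPhase]; push_cast; ring_nf

@[simp]
theorem norm_fourierPhase (ξ x : E) : ‖fourierPhase ξ x‖ = 1 := by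
  rw [fourierPhase_eq_exp_I_mul, mul_comm, Complex.norm_exp_ofReal_mul_I]

@[simp]
theorem enorm_fourierPhase (ξ x : E) : ‖fourierPhase ξ x‖ₑ = 1 := by
  rw [← ofReal_norm, norm_fourierPhase, ENNReal.ofReal_one]

theorem continuous_fourierPhase (ξ : E) : Continuous (fourierPhase ξ) := by
  unfold fourierPhase; fun_prop

theorem norm_fourierPhase_sub_one_le (ξ x : E) :
    ‖fourierPhase ξ x - 1‖ ≤ 2 * π * (‖x‖ * ‖ξ‖) := by
  rw [fourierPhase_eq_exp_I_mul]
  refine Real.norm_exp_I_mul_ofReal_sub_one_le.trans ?_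
  rw [norm_neg, norm_mul, Real.norm_of_nonneg (by positivity)]
  gcongr
  exact abs_real_inner_le_norm x ξ

theorem fourierPhase_add_of_inner_eq_half {ξ y : E} (hy : ⟪y, ξ⟫ = 1 / 2) (x : E) :
    fourierPhase ξ (x + y) = -fourierPhase ξ x := by
  have half_turn : -(2 * π * Complex.I) * ((1 / 2 : ℝ) : ℂ) = -(π * Complex.I) := by
    push_cast; ring
  rw [fourierPhase, fourierPhase, inner_add_left, hy, Complex.ofReal_add, mul_add,
    Complex.exp_add, half_turn, Complex.exp_neg, Complex.exp_pi_mul_I]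
  simp

theorem norm_mul_fourierPhase_sub_one_le {z : ℂ} {C : ℝ} {n : ℕ} (hn : n ≠ 0) (hC : 0 ≤ C)
    (ξ : E) {x : E} (hx : x ≠ 0) (hz : ‖z‖ ≤ C / ‖x‖ ^ n) :
    ‖z * (fourierPhase ξ x - 1)‖ ≤ 2 * π * ‖ξ‖ * C / ‖x‖ ^ (n - 1) := by
  have hx₀ : 0 < ‖x‖ := norm_pos_iff.2 hx
  rw [norm_mul]
  refine (mul_le_mul hz (norm_fourierPhase_sub_one_le ξ x) (norm_nonneg _)
    (by positivity)).trans_eq ?_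
  rw [← pow_sub_one_mul hn ‖x‖]
  field_simp

theorem integrable_mul_fourierPhase_iff [MeasurableSpace E] [OpensMeasurableSpace E]
    {μ : Measure E} {f : E → ℂ} (ξ : E) :
    Integrable (fun x => f x * fourierPhase ξ x) μ ↔ Integrable f μ := by
  refine ⟨fun h => ?_, fun h => h.mul_bdd (continuous_fourierPhase ξ).aestronglyMeasurable
    (.of_forall fun x => (norm_fourierPhase ξ x).le)⟩
  refine h.congr' ?_ (.of_forall fun x => by simp)
  have hinv := (continuous_fourierPhase ξ).inv₀ fun x => Complex.exp_ne_zero _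
  refine (h.aestronglyMeasurable.mul hinv.aestronglyMeasurable).congr (.of_forall fun x => ?_)
  simp [fourierPhase, Complex.exp_ne_zero]

end FourierPhase

theorem two_mul_integral_eq_integral_sub_shift {G : Type*} [NormedAddCommGroup G]
    [MeasurableSpace G] [MeasurableAdd G] {μ : Measure G} [μ.IsAddRightInvariant]
    {f e : G → ℂ} {y : G} (he : ∀ z, e (z + y) = -e z) (hf : Integrable (fun z => f z * e z) μ) :
    2 * ∫ z, f z * e z ∂μ = ∫ z, (f z - f (z + y)) * e z ∂μ := by
  have hshift : Integrable (fun z => f (z + y) * e (z + y)) μ := hf.comp_add_right y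
  calc 2 * ∫ z, f z * e z ∂μ = (∫ z, f z * e z ∂μ) + ∫ z, f (z + y) * e (z + y) ∂μ := by
        rw [integral_add_right_eq_self (fun z => f z * e z) y]; ring
    _ = ∫ z, (f z - f (z + y)) * e z ∂μ := by
        rw [← integral_add hf hshift]
        congr 1 with z
        rw [he]; ring

section NormTail

variable {E G : Type*} [NormedAddCommGroup E] [MeasurableSpace E] [OpensMeasurableSpace E]
  [NormedAddCommGroup G] [NormedSpace ℝ G] {μ : Measure E}

theorem setIntegral_lt_norm_eq_zero {K : E → G} {R : ℝ} (hK : IntegrableOn K {x | R < ‖x‖} μ)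
    (hcanc : ∀ R', R < R' → ∫ x in {x | R < ‖x‖ ∧ ‖x‖ < R'}, K x ∂μ = 0) :
    ∫ x in {x | R < ‖x‖}, K x ∂μ = 0 := by
  set A : ℕ → Set E := fun N => {x | R < ‖x‖ ∧ ‖x‖ < N}
  have hA_meas : ∀ N, MeasurableSet (A N) := fun N =>
    (measurableSet_lt measurable_const measurable_norm).inter
      (measurableSet_lt measurable_norm measurable_const)
  have hA_mono : Monotone A := fun N N' h x hx => ⟨hx.1, hx.2.trans_le (by exact_mod_cast h)⟩
  have hA_union : ⋃ N, A N = {x | R < ‖x‖} := by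
    ext x
    simp only [A, mem_iUnion, mem_ofPred_eq]
    exact ⟨fun ⟨_, h, _⟩ => h,
      fun h => ⟨⌊‖x‖⌋₊ + 1, h, by push_cast; exact Nat.lt_floor_add_one _⟩⟩
  have hA_zero : ∀ N, ∫ x in A N, K x ∂μ = 0 := by
    intro N
    rcases lt_or_ge R N with h | h
    · exact hcanc N h
    · have : A N = ∅ := eq_empty_of_forall_notMem fun x hx => (hx.1.trans hx.2).not_ge h
      rw [this, Measure.restrict_empty, integral_zero_measure]
  have := tendsto_setIntegral_of_monotone hA_meas hA_mono (hA_union ▸ hK)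
  simp only [hA_zero, hA_union] at this
  exact tendsto_nhds_unique this tendsto_const_nhds

theorem setIntegral_lt_norm_eq_add {f : E → G} {R M : ℝ} (hRM : R < M)
    (hf : IntegrableOn f {x | R < ‖x‖} μ) :
    ∫ x in {x | R < ‖x‖}, f x ∂μ =
      (∫ x in {x | R < ‖x‖ ∧ ‖x‖ < M}, f x ∂μ) + ∫ x in {x | M ≤ ‖x‖}, f x ∂μ := by
  have hsplit : {x : E | R < ‖x‖} = {x | R < ‖x‖ ∧ ‖x‖ < M} ∪ {x | M ≤ ‖x‖} := by
    ext x
    simp only [mem_union, mem_ofPred_eq]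
    exact ⟨fun hx => (lt_or_ge ‖x‖ M).imp (fun h => ⟨hx, h⟩) id,
      fun hx => hx.elim And.left hRM.trans_le⟩
  have hdisj : Disjoint {x : E | R < ‖x‖ ∧ ‖x‖ < M} {x | M ≤ ‖x‖} :=
    disjoint_left.2 fun x hx hx' => (not_le.2 hx.2) hx'
  rw [hsplit] at hf ⊢
  exact setIntegral_union hdisj (measurableSet_le measurable_const measurable_norm)
    (hf.mono_set subset_union_left) (hf.mono_set subset_union_right)

end NormTail

theorem enorm_indicator_sub_indicator_add_le {E : Type*} [NormedAddCommGroup E]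
    {K : E → ℂ} {C M : ℝ} {ω : ℝ → ℝ} {n : ℕ} {y : E}
    (hsize : ∀ x, x ≠ 0 → ‖K x‖ ≤ C / ‖x‖ ^ n)
    (hreg : ∀ x y : E, x ≠ 0 → 2 * ‖y‖ ≤ ‖x‖ → ‖K (x - y) - K x‖ ≤ ω (‖y‖ / ‖x‖) / ‖x‖ ^ n)
    (hC : 0 ≤ C) (hM : 0 < M) (hy : 2 * ‖y‖ ≤ M) (z : E) :
    ‖{x | M ≤ ‖x‖}.indicator K z - {x | M ≤ ‖x‖}.indicator K (z + y)‖ₑ ≤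
      {x | M ≤ ‖x‖}.indicator (fun x => ENNReal.ofReal (ω (‖y‖ / ‖x‖) / ‖x‖ ^ n)) (z + y) +
        (closedBall 0 (2 * M)).indicator (fun _ => ENNReal.ofReal (C / M ^ n)) z := by
  have hfar : ∀ x, M ≤ ‖x‖ → ‖K x‖ₑ ≤ ENNReal.ofReal (C / M ^ n) := fun x hx => by
    rw [← ofReal_norm]
    refine ENNReal.ofReal_le_ofReal ((hsize x (norm_pos_iff.1 (hM.trans_le hx))).trans ?_)
    gcongr
  by_cases hz : M ≤ ‖z‖ <;> by_cases hzy : M ≤ ‖z + y‖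
  · have hreg' := hreg (z + y) y (norm_pos_iff.1 (hM.trans_le hzy)) (hy.trans hzy)
    rw [add_sub_cancel_right] at hreg'
    simp only [indicator_of_mem (show z ∈ {x | M ≤ ‖x‖} from hz),
      indicator_of_mem (show z + y ∈ {x | M ≤ ‖x‖} from hzy)]
    exact le_add_right (by rw [← ofReal_norm]; exact ENNReal.ofReal_le_ofReal hreg')
  · have hz_ball : z ∈ closedBall (0 : E) (2 * M) := by
      rw [mem_closedBall_zero_iff]
      calc ‖z‖ = ‖(z + y) - y‖ := by rw [add_sub_cancel_right]
        _ ≤ ‖z + y‖ + ‖y‖ := norm_sub_le _ _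
        _ ≤ 2 * M := by linarith
    simp only [indicator_of_mem (show z ∈ {x | M ≤ ‖x‖} from hz),
      indicator_of_notMem (show z + y ∉ {x | M ≤ ‖x‖} from hzy), indicator_of_mem hz_ball,
      sub_zero, zero_add]
    exact hfar z hz
  · have hz_ball : z ∈ closedBall (0 : E) (2 * M) := by
      rw [mem_closedBall_zero_iff]; linarith
    simp only [indicator_of_notMem (show z ∉ {x | M ≤ ‖x‖} from hz),
      indicator_of_mem (show z + y ∈ {x | M ≤ ‖x‖} from hzy), indicator_of_mem hz_ball,
      zero_sub, enorm_neg]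
    exact le_add_left (hfar _ hzy)
  · simp only [indicator_of_notMem (show z ∉ {x | M ≤ ‖x‖} from hz),
      indicator_of_notMem (show z + y ∉ {x | M ≤ ‖x‖} from hzy), sub_zero, enorm_zero]
    exact zero_le

section RadialEstimates

variable {E : Type*} [NormedAddCommGroup E] [NormedSpace ℝ E] [FiniteDimensional ℝ E]
  [MeasurableSpace E] [BorelSpace E] [Nontrivial E] {μ : Measure E} [μ.IsAddHaarMeasure]

local notation "dim" => Module.finrank ℝ

theorem setLIntegral_annulus_div_norm_pow_pred (c : ℝ) {R M : ℝ} (hR : 0 < R) :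
    ∫⁻ x in {x : E | R < ‖x‖ ∧ ‖x‖ < M}, ENNReal.ofReal (c / ‖x‖ ^ (dim E - 1)) ∂μ =
      dim E * μ (ball 0 1) * ENNReal.ofReal c * ENNReal.ofReal (M - R) := by
  refine (setLIntegral_fun_norm_addHaar μ (f := fun r => ENNReal.ofReal (c / r ^ (dim E - 1)))
    (by fun_prop) measurableSet_Ioo fun r hr => hR.trans hr.1).trans ?_
  rw [mul_assoc _ (ENNReal.ofReal c), ← Real.volume_Ioo,
    ← setLIntegral_const (Ioo R M) (ENNReal.ofReal c)]
  congr 1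
  refine setLIntegral_congr_fun measurableSet_Ioo fun r hr => ?_
  have : 0 < r := hR.trans hr.1
  rw [← ENNReal.ofReal_mul (by positivity)]
  congr 1
  field_simp

theorem setLIntegral_le_norm_comp_div_le_diniNorm {ω : ℝ → ℝ} (hω_meas : Measurable ω)
    (hω_int : IntegrableOn (fun t => ω t / t) (Ioo 0 1)) (hω_nonneg : ∀ t ∈ Ioo (0 : ℝ) 1, 0 ≤ ω t)
    {b M : ℝ} (hb : 0 < b) (hbM : b < M) :
    ∫⁻ x in {x : E | M ≤ ‖x‖}, ENNReal.ofReal (ω (b / ‖x‖) / ‖x‖ ^ dim E) ∂μ ≤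
      dim E * μ (ball 0 1) * ENNReal.ofReal (diniNorm ω) := by
  have hM : 0 < M := hb.trans hbM
  refine (setLIntegral_fun_norm_addHaar μ (f := fun r => ENNReal.ofReal (ω (b / r) / r ^ dim E))
    (by fun_prop) measurableSet_Ici fun r (hr : M ≤ r) => hM.trans_le hr).trans_le ?_
  gcongr
  refine le_of_eq_of_le (setLIntegral_congr_fun measurableSet_Ici fun r (hr : M ≤ r) => ?_)
    (lintegral_Ici_comp_div_le_diniNorm hω_int hω_nonneg hb hbM)
  have hr : 0 < r := hM.trans_le hr
  rw [← ENNReal.ofReal_mul (by positivity), ← pow_sub_one_mul Module.finrank_pos.ne' r]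
  congr 1
  field_simp

theorem lintegral_enorm_indicator_sub_indicator_add_le {K : E → ℂ} {C M : ℝ} {ω : ℝ → ℝ}
    {y : E} (hsize : ∀ x, x ≠ 0 → ‖K x‖ ≤ C / ‖x‖ ^ dim E)
    (hreg : ∀ x y : E, x ≠ 0 → 2 * ‖y‖ ≤ ‖x‖ → ‖K (x - y) - K x‖ ≤ ω (‖y‖ / ‖x‖) / ‖x‖ ^ dim E)
    (hC : 0 ≤ C) (hω_meas : Measurable ω) (hω_int : IntegrableOn (fun t => ω t / t) (Ioo 0 1))
    (hω_nonneg : ∀ t ∈ Ioo (0 : ℝ) 1, 0 ≤ ω t) (hy₀ : y ≠ 0) (hy : 2 * ‖y‖ ≤ M) :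
    ∫⁻ z, ‖{x | M ≤ ‖x‖}.indicator K z - {x | M ≤ ‖x‖}.indicator K (z + y)‖ₑ ∂μ ≤
      ENNReal.ofReal (μ.real (ball 0 1) * (dim E * diniNorm ω + 2 ^ dim E * C)) := by
  have hy_pos : 0 < ‖y‖ := norm_pos_iff.2 hy₀
  have hM : 0 < M := by linarith
  set g : E → ℝ≥0∞ := fun x => ENNReal.ofReal (ω (‖y‖ / ‖x‖) / ‖x‖ ^ dim E)
  have hA : MeasurableSet {x : E | M ≤ ‖x‖} := measurableSet_le measurable_const measurable_norm
  calc _ ≤ ∫⁻ z, {x | M ≤ ‖x‖}.indicator g (z + y) +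
          (closedBall 0 (2 * M)).indicator (fun _ => ENNReal.ofReal (C / M ^ dim E)) z ∂μ :=
        lintegral_mono (enorm_indicator_sub_indicator_add_le hsize hreg hC hM hy)
    _ = ∫⁻ x in {x | M ≤ ‖x‖}, g x ∂μ +
          ENNReal.ofReal (C / M ^ dim E) * μ (closedBall 0 (2 * M)) := by
        rw [lintegral_add_right _ (measurable_const.indicator measurableSet_closedBall),
          lintegral_indicator_const measurableSet_closedBall,
          lintegral_add_right_eq_self (fun x => {x | M ≤ ‖x‖}.indicator g x) y,
          lintegral_indicator hA]
    _ ≤ dim E * μ (ball 0 1) * ENNReal.ofReal (diniNorm ω) +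
          2 ^ dim E * μ (ball 0 1) * ENNReal.ofReal C := by
        refine add_le_add
          (setLIntegral_le_norm_comp_div_le_diniNorm hω_meas hω_int hω_nonneg hy_pos (by linarith))
          (le_of_eq ?_)
        rw [Measure.addHaar_closedBall μ 0 (by positivity), ← mul_assoc,
          ← ENNReal.ofReal_mul (by positivity),
          show C / M ^ dim E * (2 * M) ^ dim E = 2 ^ dim E * C by field_simp; ring,
          ENNReal.ofReal_mul (by positivity), ENNReal.ofReal_pow zero_le_two, ENNReal.ofReal_ofNat]
        ring
    _ = _ := by
        have := diniNorm_nonneg hω_nonneg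
        rw [← ofReal_measureReal (μ := μ) (s := ball 0 1) measure_ball_lt_top.ne, mul_add,
          ENNReal.ofReal_add (by positivity) (by positivity)]
        simp only [ENNReal.ofReal_mul, ENNReal.ofReal_natCast, ENNReal.ofReal_pow,
          measureReal_nonneg, Nat.cast_nonneg, pow_nonneg, zero_le_two, ENNReal.ofReal_ofNat]
        ring

end RadialEstimates

section TruncatedFourier

variable {E : Type*} [NormedAddCommGroup E] [InnerProductSpace ℝ E] [FiniteDimensional ℝ E]
  [MeasurableSpace E] [BorelSpace E] [Nontrivial E] {μ : Measure E} [μ.IsAddHaarMeasure]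
  {K : E → ℂ} {C : ℝ} {ξ : E}

local notation "dim" => Module.finrank ℝ

theorem norm_setIntegral_annulus_mul_fourierPhase_le {R M : ℝ}
    (hsize : ∀ x, x ≠ 0 → ‖K x‖ ≤ C / ‖x‖ ^ dim E) (hC : 0 ≤ C) (hR : 0 < R)
    (hRM : ‖ξ‖ * (M - R) ≤ 1) (hK : IntegrableOn K {x | R < ‖x‖ ∧ ‖x‖ < M} μ)
    (hcanc : ∫ x in {x | R < ‖x‖ ∧ ‖x‖ < M}, K x ∂μ = 0) :
    ‖∫ x in {x | R < ‖x‖ ∧ ‖x‖ < M}, K x * fourierPhase ξ x ∂μ‖ ≤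
      μ.real (ball 0 1) * (2 * π * dim E * C) := by
  set A := {x : E | R < ‖x‖ ∧ ‖x‖ < M}
  have hA : MeasurableSet A := (measurableSet_lt measurable_const measurable_norm).inter
    (measurableSet_lt measurable_norm measurable_const)
  have hKe : IntegrableOn (fun x => K x * fourierPhase ξ x) A μ :=
    (integrable_mul_fourierPhase_iff ξ).2 hK
  have hcancel : ∫ x in A, K x * fourierPhase ξ x ∂μ =
      ∫ x in A, K x * (fourierPhase ξ x - 1) ∂μ := by
    simp only [mul_sub, mul_one]
    rw [integral_sub hKe hK, hcanc, sub_zero]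
  have hbound : ∫⁻ x in A, ‖K x * (fourierPhase ξ x - 1)‖ₑ ∂μ ≤
      ENNReal.ofReal (μ.real (ball 0 1) * (2 * π * dim E * C)) := calc
    _ ≤ ∫⁻ x in A, ENNReal.ofReal (2 * π * ‖ξ‖ * C / ‖x‖ ^ (dim E - 1)) ∂μ := by
        refine setLIntegral_mono' hA fun x hx => ?_
        have hx₀ : x ≠ 0 := norm_pos_iff.1 (hR.trans hx.1)
        rw [← ofReal_norm]
        exact ENNReal.ofReal_le_ofReal (norm_mul_fourierPhase_sub_one_le Module.finrank_pos.ne' hC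
          ξ hx₀ (hsize x hx₀))
    _ = ENNReal.ofReal (μ.real (ball 0 1) * dim E * (2 * π * ‖ξ‖ * C) * (M - R)) := by
        rw [setLIntegral_annulus_div_norm_pow_pred _ hR,
          ← ofReal_measureReal measure_ball_lt_top.ne, ← ENNReal.ofReal_natCast,
          ← ENNReal.ofReal_mul (by positivity), ← ENNReal.ofReal_mul (by positivity),
          ← ENNReal.ofReal_mul (by positivity), mul_comm (dim E : ℝ)]
    _ ≤ _ := by
        refine ENNReal.ofReal_le_ofReal ?_
        have : 0 ≤ μ.real (ball 0 1) * dim E * (2 * π * C) := by positivity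
        nlinarith
  rw [hcancel, ← toReal_enorm]
  exact ENNReal.toReal_le_of_le_ofReal (by positivity)
    ((enorm_integral_le_lintegral_enorm _).trans hbound)

theorem norm_setIntegral_le_norm_mul_fourierPhase_le {M : ℝ} {ω : ℝ → ℝ}
    (hsize : ∀ x, x ≠ 0 → ‖K x‖ ≤ C / ‖x‖ ^ dim E)
    (hreg : ∀ x y : E, x ≠ 0 → 2 * ‖y‖ ≤ ‖x‖ → ‖K (x - y) - K x‖ ≤ ω (‖y‖ / ‖x‖) / ‖x‖ ^ dim E)
    (hC : 0 ≤ C) (hω_meas : Measurable ω) (hω_int : IntegrableOn (fun t => ω t / t) (Ioo 0 1))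
    (hω_nonneg : ∀ t ∈ Ioo (0 : ℝ) 1, 0 ≤ ω t) (hξ : ξ ≠ 0) (hM : ‖ξ‖⁻¹ ≤ M)
    (hK : IntegrableOn K {x | M ≤ ‖x‖} μ) :
    ‖∫ x in {x | M ≤ ‖x‖}, K x * fourierPhase ξ x ∂μ‖ ≤
      μ.real (ball 0 1) * (dim E * diniNorm ω + 2 ^ dim E * C) / 2 := by
  set A := {x : E | M ≤ ‖x‖}
  have hA : MeasurableSet A := measurableSet_le measurable_const measurable_norm
  have hξ_pos : 0 < ‖ξ‖ := norm_pos_iff.2 hξ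
  set y : E := (2 * ‖ξ‖ ^ 2)⁻¹ • ξ
  have hyξ : ⟪y, ξ⟫ = 1 / 2 := by
    rw [real_inner_smul_left, real_inner_self_eq_norm_sq]
    field_simp
  have hy : 2 * ‖y‖ ≤ M := by
    rw [norm_smul, Real.norm_of_nonneg (by positivity)]
    convert hM using 1
    field_simp
  have hy₀ : y ≠ 0 := smul_ne_zero (by positivity) hξ
  have hF : Integrable (fun z => A.indicator K z * fourierPhase ξ z) μ :=
    (integrable_mul_fourierPhase_iff ξ).2 ((integrable_indicator_iff hA).2 hK)
  have hshift := two_mul_integral_eq_integral_sub_shift (fourierPhase_add_of_inner_eq_half hyξ) hF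
  have hL1 := lintegral_enorm_indicator_sub_indicator_add_le (μ := μ) hsize hreg hC hω_meas hω_int
    hω_nonneg hy₀ hy
  have h2 : ‖2 * ∫ z, A.indicator K z * fourierPhase ξ z ∂μ‖ ≤
      μ.real (ball 0 1) * (dim E * diniNorm ω + 2 ^ dim E * C) := by
    rw [hshift, ← toReal_enorm]
    refine ENNReal.toReal_le_of_le_ofReal (by have := diniNorm_nonneg hω_nonneg; positivity) ?_
    refine (enorm_integral_le_lintegral_enorm _).trans (le_of_eq_of_le ?_ hL1)
    simp only [enorm_mul, enorm_fourierPhase, mul_one, A]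
  rw [← integral_indicator hA]
  simp only [indicator_mul_left]
  rw [norm_mul, Complex.norm_two] at h2
  linarith

theorem norm_setIntegral_lt_norm_mul_fourierPhase_le {R : ℝ} {ω : ℝ → ℝ}
    (hsize : ∀ x, x ≠ 0 → ‖K x‖ ≤ C / ‖x‖ ^ dim E)
    (hreg : ∀ x y : E, x ≠ 0 → 2 * ‖y‖ ≤ ‖x‖ → ‖K (x - y) - K x‖ ≤ ω (‖y‖ / ‖x‖) / ‖x‖ ^ dim E)
    (hcanc : ∀ ε R : ℝ, 0 < ε → ε < R → ∫ x in {x | ε < ‖x‖ ∧ ‖x‖ < R}, K x ∂μ = 0)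
    (hC : 0 ≤ C) (hω_meas : Measurable ω) (hω_int : IntegrableOn (fun t => ω t / t) (Ioo 0 1))
    (hω_nonneg : ∀ t ∈ Ioo (0 : ℝ) 1, 0 ≤ ω t) (hR : 0 < R) (ξ : E) :
    ‖∫ x in {x | R < ‖x‖}, K x * fourierPhase ξ x ∂μ‖ ≤
      (2 * π * dim E + 2 ^ dim E) * μ.real (ball 0 1) * (C + diniNorm ω) := by
  have hD := diniNorm_nonneg hω_nonneg
  by_cases hKe : IntegrableOn (fun x => K x * fourierPhase ξ x) {x | R < ‖x‖} μ
  swap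
  · rw [integral_undef hKe, norm_zero]
    positivity
  have hK : IntegrableOn K {x | R < ‖x‖} μ := (integrable_mul_fourierPhase_iff ξ).1 hKe
  rcases eq_or_ne ξ 0 with rfl | hξ
  · simp only [fourierPhase, inner_zero_right, Complex.ofReal_zero, mul_zero, Complex.exp_zero,
      mul_one, setIntegral_lt_norm_eq_zero hK fun R' hR' => hcanc R R' hR hR', norm_zero]
    positivity
  set M := R + ‖ξ‖⁻¹
  have hRM : R < M := lt_add_of_pos_right R (inv_pos.2 (norm_pos_iff.2 hξ))
  have hnear := norm_setIntegral_annulus_mul_fourierPhase_le (μ := μ) (ξ := ξ) hsize hC hR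
    (by simp [M, norm_ne_zero_iff.2 hξ]) (hK.mono_set fun x hx => hx.1) (hcanc R M hR hRM)
  have hfar := norm_setIntegral_le_norm_mul_fourierPhase_le hsize hreg hC hω_meas hω_int hω_nonneg
    hξ (le_add_of_nonneg_left hR.le) (hK.mono_set fun x hx => hRM.trans_le hx)
  rw [setIntegral_lt_norm_eq_add hRM hKe]
  refine (norm_add_le _ _).trans ((add_le_add hnear hfar).trans ?_)
  have hVdD : 0 ≤ μ.real (ball 0 1) * dim E * diniNorm ω := by positivity
  have hV2C : 0 ≤ μ.real (ball 0 1) * 2 ^ dim E * C := by positivity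
  have hV2D : 0 ≤ μ.real (ball 0 1) * 2 ^ dim E * diniNorm ω := by positivity
  nlinarith [mul_le_mul_of_nonneg_left pi_gt_three.le hVdD]

end TruncatedFourier

theorem exists_monotone_eqOn_Ici_of_subadditive {ω : ℝ → ℝ} (hω0 : ω 0 = 0)
    (hsub : ∀ u t s, 0 ≤ u → 0 ≤ t → 0 ≤ s → u ≤ t + s → ω u ≤ ω t + ω s) :
    ∃ ω' : ℝ → ℝ, Monotone ω' ∧ EqOn ω' ω (Ici 0) := by
  refine ⟨fun t => ω (max t 0), fun a b hab => ?_, fun t (ht : 0 ≤ t) => by simp [ht]⟩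
  simpa [hω0] using hsub _ _ 0 (le_max_right a 0) (le_max_right b 0) le_rfl
    (by simpa using max_le_max_right 0 hab)

/-- for an `ω`-Dini Calderón–Zygmund convolution kernel with annulus
cancellation, the Fourier transforms of the truncations `K χ_{{|x| > 2^k}}` are uniformly
bounded by `c_n (C_K + ‖ω‖_Dini)`. -/
theorem truncated_fourier_uniform_bound (n : ℕ) (hn : 1 ≤ n) :
    ∃ c : ℝ, 0 < c ∧
      ∀ (K : EuclideanSpace ℝ (Fin n) → ℂ) (C_K : ℝ) (ω : ℝ → ℝ), 0 < C_K →
        (∀ t, 0 ≤ t → 0 ≤ ω t) → ω 0 = 0 →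
        (∀ u t s, 0 ≤ u → 0 ≤ t → 0 ≤ s → u ≤ t + s → ω u ≤ ω t + ω s) →
        IntegrableOn (fun t => ω t / t) (Set.Ioo (0 : ℝ) 1) →
        (∀ x : EuclideanSpace ℝ (Fin n), x ≠ 0 → ‖K x‖ ≤ C_K / ‖x‖ ^ n) →
        (∀ x y : EuclideanSpace ℝ (Fin n), x ≠ 0 → 2 * ‖y‖ ≤ ‖x‖ →
          ‖K (x - y) - K x‖ ≤ ω (‖y‖ / ‖x‖) / ‖x‖ ^ n) →
        (∀ ε R : ℝ, 0 < ε → ε < R →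
          ∫ x in {x : EuclideanSpace ℝ (Fin n) | ε < ‖x‖ ∧ ‖x‖ < R}, K x = 0) →
        ∀ (k : ℤ) (ξ : EuclideanSpace ℝ (Fin n)),
          ‖∫ x in {x : EuclideanSpace ℝ (Fin n) | (2 : ℝ) ^ k < ‖x‖},
              K x * Complex.exp (-(2 * π * Complex.I) * (⟪x, ξ⟫ : ℝ))‖ ≤
            c * (C_K + diniNorm ω) := by
  have : Nonempty (Fin n) := ⟨⟨0, hn⟩⟩
  have hV : 0 < volume.real (ball (0 : EuclideanSpace ℝ (Fin n)) 1) :=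
    ENNReal.toReal_pos (measure_ball_pos _ _ one_pos).ne' measure_ball_lt_top.ne
  refine ⟨(2 * π * n + 2 ^ n) * volume.real (ball (0 : EuclideanSpace ℝ (Fin n)) 1),
    by positivity, ?_⟩
  intro K C ω hC hω_nonneg hω0 hω_sub hω_int hsize hreg hcanc k ξ
  -- `ω` need not be measurable; on `[0, ∞)` it agrees with a monotone, hence measurable, function
  obtain ⟨ω', hω'_mono, hω'_eq⟩ := exists_monotone_eqOn_Ici_of_subadditive hω0 hω_sub
  have hω'_Ioo : EqOn ω' ω (Ioo 0 1) := hω'_eq.mono fun t ht => le_of_lt ht.1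
  have hω'_dini : diniNorm ω' = diniNorm ω :=
    setIntegral_congr_fun measurableSet_Ioo fun t ht => by rw [hω'_Ioo ht]
  have hbound := norm_setIntegral_lt_norm_mul_fourierPhase_le (μ := volume) (ω := ω') (ξ := ξ)
    (by simpa only [finrank_euclideanSpace_fin] using hsize)
    (fun x y hx hy => by
      rw [finrank_euclideanSpace_fin, hω'_eq (div_nonneg (norm_nonneg y) (norm_nonneg x))]
      exact hreg x y hx hy)
    hcanc hC.le hω'_mono.measurable
    (hω_int.congr_fun (fun t ht => by rw [hω'_Ioo ht]) measurableSet_Ioo)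
    (fun t ht => hω'_Ioo ht ▸ hω_nonneg t ht.1.le) (zpow_pos two_pos k)
  simpa only [finrank_euclideanSpace_fin, hω'_dini, fourierPhase] using hbound

end
end
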